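/- arXiv:1804.06138 — 6 statements merged into one kernel-verified Lean document; each statement's English description precedes it below -/
import Mathlib

section
/- Let q be a prime power, n a positive integer with gcd(n,q)=1, and let α be a primitive n-th root of unity in some extension field of F_{q^2}. For 0 ≤ i < n, let f(x) be the minimal polynomial of α^i over F_{q^2}. Then f(x) is SCRIM if and only if Cl_{q^2,n}(i) = Cl_{q^2,n}(−qi mod n). -/
open Polynomial

/-- The reciprocal polynomial `f*(x) = x^(deg f) * f(0)⁻¹ * f(1/x)`. -/
noncomputable def crecip {F : Type*} [Field F] (f : F[X]) : F[X] :=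
  C (f.coeff 0)⁻¹ * f.reverse

/-- The conjugate-reciprocal polynomial `f†`, obtained by applying the
conjugation `a ↦ a ^ q` to each coefficient of `f*`. -/
noncomputable def cdagger {F : Type*} [Field F] (q : ℕ) (f : F[X]) : F[X] :=
  (crecip f).sum fun i a => C (a ^ q) * X ^ i

/-- A polynomial is SCRIM if it is monic, irreducible, and self-conjugate-reciprocal. -/
def IsSCRIM {F : Type*} [Field F] (q : ℕ) (f : F[X]) : Prop :=
  f.Monic ∧ Irreducible f ∧ f = cdagger q f

/-- The set `Ω_{q²,n}` of SCRIM factors of `x^n - 1` over `F = F_{q²}`. -/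
def scrimFactors (F : Type*) [Field F] (q n : ℕ) : Set F[X] :=
  {f | IsSCRIM q f ∧ f ∣ X ^ n - 1}

/-- The cyclotomic coset of `q²` modulo `n` containing `i`. -/
def cycCoset (q n i : ℕ) : Set (ZMod n) :=
  {x | ∃ j : ℕ, x = (i : ZMod n) * (q : ZMod n) ^ (2 * j)}

/-- A monic divisor of a monic polynomial with at least as large degree equals it. -/
lemma monic_dvd_eq_aux {F : Type*} [Field F] {f g : F[X]} (hf : f.Monic) (hg : g.Monic)
    (hdvd : f ∣ g) (hdeg : g.natDegree ≤ f.natDegree) : f = g := by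
  obtain ⟨c, rfl⟩ := hdvd
  have hc : c ≠ 0 := by
    rintro rfl
    simp only [mul_zero] at hg
    exact (by simp [Polynomial.Monic] at hg)
  have hf0 : f ≠ 0 := hf.ne_zero
  have hdeg' : f.natDegree + c.natDegree ≤ f.natDegree := by
    rw [← Polynomial.natDegree_mul hf0 hc]; exact hdeg
  have hc0 : c.natDegree = 0 := by omega
  obtain ⟨a, rfl⟩ := Polynomial.natDegree_eq_zero.mp hc0
  have ha : a = 1 := by
    have h1 := hg
    rw [Polynomial.Monic, Polynomial.leadingCoeff_mul, hf.leadingCoeff, one_mul,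
      Polynomial.leadingCoeff_C] at h1
    exact h1
  simp [ha]

set_option maxHeartbeats 1600000 in
theorem stmt0 {q n : ℕ} (hq : IsPrimePow q)
    {F K : Type*} [Field F] [Fintype F] (hF : Fintype.card F = q ^ 2)
    [Field K] [Algebra F K]
    (hn : 0 < n) (hgcd : Nat.Coprime n q)
    {α : K} (hα : IsPrimitiveRoot α n) (i : ℕ) (hi : i < n) :
    IsSCRIM q (minpoly F (α ^ i)) ↔
      cycCoset q n i =
        {x : ZMod n | ∃ j : ℕ,
          x = -((q : ZMod n) * (i : ZMod n)) * (q : ZMod n) ^ (2 * j)} := by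
  classical
  haveI : NeZero n := ⟨hn.ne'⟩
  obtain ⟨p, k, hp, hk, hpk⟩ := hq
  have hppr : p.Prime := Nat.prime_iff.mpr hp
  haveI : Fact p.Prime := ⟨hppr⟩
  have hq2 : 2 ≤ q := by
    rw [← hpk]
    calc 2 ≤ p := hppr.two_le
    _ = p ^ 1 := (pow_one p).symm
    _ ≤ p ^ k := Nat.pow_le_pow_right hppr.pos hk
  -- characteristic
  obtain ⟨m', hrprime, hcardr⟩ := FiniteField.card F (ringChar F)
  have hpr : p = ringChar F := by
    have h1 : p ^ (2 * k) = ringChar F ^ (m' : ℕ) := by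
      rw [← hcardr, hF, ← hpk, ← pow_mul, mul_comm k 2]
    have h2 : p ∣ ringChar F ^ (m' : ℕ) := h1 ▸ dvd_pow_self p (by omega)
    exact (Nat.prime_dvd_prime_iff_eq hppr hrprime).mp (hppr.dvd_of_dvd_pow h2)
  haveI hFp : CharP F p := hpr ▸ ringChar.charP F
  haveI hKp : CharP K p := charP_of_injective_algebraMap (algebraMap F K).injective p
  haveI : ExpChar F p := .prime hppr
  haveI : ExpChar K p := .prime hppr
  -- Frobenius maps
  set φ : F →+* F := iterateFrobenius F p k with hφdef
  set χ : K →+* K := iterateFrobenius K p k with hχdef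
  have hφ : ∀ a : F, φ a = a ^ q := fun a => by rw [hφdef, iterateFrobenius_def, hpk]
  have hχ : ∀ x : K, χ x = x ^ q := fun x => by rw [hχdef, iterateFrobenius_def, hpk]
  have hpow2 : p ^ (2 * k) = q ^ 2 := by rw [← hpk, ← pow_mul, mul_comm k 2]
  have hqq : ∀ a : F, a ^ q ^ 2 = a := fun a => by rw [← hF]; exact FiniteField.pow_card a
  let ψ : K →ₐ[F] K :=
    { iterateFrobenius K p (2 * k) with
      commutes' := fun a => by
        simp only [RingHom.toMonoidHom_eq_coe, OneHom.toFun_eq_coe, MonoidHom.toOneHom_coe,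
          MonoidHom.coe_coe]
        rw [iterateFrobenius_def, hpow2, ← map_pow, hqq] }
  have hψ : ∀ x : K, ψ x = x ^ q ^ 2 := fun x => by
    show iterateFrobenius K p (2 * k) x = x ^ q ^ 2
    rw [iterateFrobenius_def, hpow2]
  -- basic facts about β and its minimal polynomial
  set β := α ^ i with hβdef
  have hβn : β ^ n = 1 := by rw [hβdef, ← pow_mul, mul_comm, pow_mul, hα.pow_eq_one, one_pow]
  have hβ0 : β ≠ 0 := by
    intro h
    rw [h, zero_pow hn.ne'] at hβn
    exact zero_ne_one hβn
  have hint : IsIntegral F β :=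
    ⟨X ^ n - C 1, monic_X_pow_sub_C 1 hn.ne', by simp [hβn]⟩
  set f := minpoly F β with hfdef
  have hmon : f.Monic := minpoly.monic hint
  have hirr : Irreducible f := minpoly.irreducible hint
  have hc0 : f.coeff 0 ≠ 0 := minpoly.coeff_zero_ne_zero hint hβ0
  -- cdagger as a map
  have hcd : ∀ g : F[X], cdagger q g = (crecip g).map φ := by
    intro g
    rw [cdagger]
    show _ = eval₂ (C.comp φ) X (crecip g)
    rw [eval₂_eq_sum]
    congr 1
    funext e a
    rw [RingHom.comp_apply, hφ]
  -- monicity and degree of cdagger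
  have hnt0 : f.natTrailingDegree = 0 := natTrailingDegree_eq_zero.mpr (Or.inr hc0)
  have htc : f.trailingCoeff = f.coeff 0 := by rw [Polynomial.trailingCoeff, hnt0]
  have hcrm : (crecip f).Monic := by
    rw [crecip, Polynomial.Monic, Polynomial.leadingCoeff_mul, Polynomial.leadingCoeff_C,
      reverse_leadingCoeff, htc]
    exact inv_mul_cancel₀ hc0
  have hcdm : (cdagger q f).Monic := by rw [hcd]; exact hcrm.map φ
  have hcddeg : (cdagger q f).natDegree = f.natDegree := by
    rw [hcd, natDegree_map_eq_of_injective φ.injective, crecip,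
      natDegree_C_mul (inv_ne_zero hc0), reverse_natDegree, hnt0, tsub_zero]
  -- roots are closed under the q²-power map
  have hroot2 : ∀ x : K, (Polynomial.aeval x) f = 0 → (Polynomial.aeval (x ^ q ^ 2)) f = 0 := by
    intro x hx
    have h1 := Polynomial.aeval_algHom_apply ψ x f
    rw [hψ] at h1
    rw [h1, hx, map_zero]
  -- γ := (β^q)⁻¹ is a root of cdagger q f
  set γ := (β ^ q)⁻¹ with hγdef
  have hβq0 : β ^ q ≠ 0 := pow_ne_zero _ hβ0
  have hstepB : (Polynomial.aeval (β ^ q)) (f.map φ) = 0 := by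
    have hcomp : χ.comp ((algebraMap F K).comp φ) = algebraMap F K := by
      ext a
      rw [RingHom.comp_apply, RingHom.comp_apply, hχ, hφ, ← map_pow, ← pow_mul, ← pow_two, hqq]
    have h1 : χ ((Polynomial.aeval (β ^ q)) (f.map φ)) = (Polynomial.aeval (β ^ q ^ 2)) f := by
      rw [aeval_def, eval₂_map, hom_eval₂, hcomp, hχ, ← pow_mul, ← pow_two, aeval_def]
    have h2 : (Polynomial.aeval (β ^ q ^ 2)) f = 0 := hroot2 β (minpoly.aeval F β)
    have h3 : χ ((Polynomial.aeval (β ^ q)) (f.map φ)) = χ 0 := by rw [h1, h2, map_zero]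
    exact χ.injective h3
  have key1 : (Polynomial.aeval γ) (cdagger q f) = 0 := by
    rw [hcd, crecip, Polynomial.map_mul, map_C, map_mul]
    have hrev : (f.reverse).map φ = (f.map φ).reverse := by
      rw [Polynomial.reverse, Polynomial.reverse, reflect_map,
        natDegree_map_eq_of_injective φ.injective]
    rw [hrev]
    haveI : Invertible (β ^ q) := invertibleOfNonzero hβq0
    have h4 : eval₂ (algebraMap F K) (⅟ (β ^ q)) ((f.map φ).reverse) = 0 :=
      (eval₂_reverse_eq_zero_iff (algebraMap F K) (β ^ q) (f.map φ)).mpr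
        (by rw [← aeval_def]; exact hstepB)
    rw [invOf_eq_inv] at h4
    have h5 : (Polynomial.aeval γ) ((f.map φ).reverse) = 0 := by
      rw [hγdef, aeval_def]; exact h4
    rw [h5, mul_zero]
  -- periodicity
  set m := n.totient with hmdef
  have hm0 : 0 < m := Nat.totient_pos.mpr hn
  have hQcop : Nat.Coprime (q ^ 2) n := (hgcd.pow_right 2).symm
  have hTq : ((q : ZMod n)) ^ m = 1 := by
    have := (Nat.ModEq.pow_totient hgcd.symm).symm
    have h5 := (ZMod.natCast_eq_natCast_iff _ _ _).mpr this
    push_cast at h5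
    exact h5.symm
  have hQm : β ^ (q ^ 2) ^ m = β := by
    have h6 : ((q ^ 2 : ℕ) : ZMod n) ^ m = 1 := by
      push_cast
      rw [← pow_mul, mul_comm 2 m, pow_mul, hTq, one_pow]
    have h7 : (((q ^ 2) ^ m : ℕ) : ZMod n) = ((1 : ℕ) : ZMod n) := by push_cast at h6 ⊢; exact h6
    have h8 : (q ^ 2) ^ m ≡ 1 [MOD n] := (ZMod.natCast_eq_natCast_iff _ _ _).mp h7
    have h9 : 1 ≤ (q ^ 2) ^ m := Nat.one_le_pow _ _ (by positivity)
    have h10 : n ∣ (q ^ 2) ^ m - 1 := (Nat.modEq_iff_dvd' h9).mp h8.symm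
    obtain ⟨c, hc⟩ := h10
    have h11 : (q ^ 2) ^ m = 1 + n * c := by omega
    rw [h11, pow_add, pow_one, pow_mul, hβn, one_pow, mul_one]
  -- all β^(Q^j) are roots of f
  have hrootpow : ∀ j : ℕ, (Polynomial.aeval (β ^ (q ^ 2) ^ j)) f = 0 := by
    intro j
    induction j with
    | zero => rw [pow_zero, pow_one]; exact minpoly.aeval F β
    | succ j ih =>
        have h12 : β ^ (q ^ 2) ^ (j + 1) = (β ^ (q ^ 2) ^ j) ^ q ^ 2 :=
          calc β ^ (q ^ 2) ^ (j + 1) = β ^ ((q ^ 2) ^ j * q ^ 2) :=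
                congrArg (fun t => β ^ t) (pow_succ (q ^ 2) j)
            _ = (β ^ (q ^ 2) ^ j) ^ q ^ 2 := pow_mul β _ _
        rw [h12]
        exact hroot2 _ ih
  -- fixed points of x ↦ x^(q²) in K lie in the image of F
  have hfix : ∀ x : K, x ^ q ^ 2 = x → x ∈ Set.range (algebraMap F K) := by
    intro x hx
    set P : K[X] := X ^ q ^ 2 - X with hPdef
    have hdegP : P.natDegree = q ^ 2 := by
      rw [hPdef]
      have : ((X : K[X]) ^ q ^ 2 - X).natDegree = ((X : K[X]) ^ q ^ 2).natDegree := by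
        apply Polynomial.natDegree_sub_eq_left_of_natDegree_lt
        rw [natDegree_X_pow, natDegree_X]
        nlinarith
      rw [this, natDegree_X_pow]
    have hP0 : P ≠ 0 := by
      intro h
      rw [h, natDegree_zero] at hdegP
      nlinarith
    set T : Finset K := Finset.univ.image (algebraMap F K) with hTdef
    have hTcard : T.card = q ^ 2 := by
      rw [hTdef, Finset.card_image_of_injective _ (algebraMap F K).injective,
        Finset.card_univ, hF]
    have hTsub : T ⊆ P.roots.toFinset := by
      intro y hy
      rw [hTdef, Finset.mem_image] at hy
      obtain ⟨a, -, rfl⟩ := hy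
      rw [Multiset.mem_toFinset, mem_roots hP0]
      show P.eval _ = 0
      rw [hPdef]
      simp only [eval_sub, eval_pow, eval_X]
      rw [← map_pow, hqq, sub_self]
    have hrc : P.roots.toFinset.card ≤ q ^ 2 := by
      calc P.roots.toFinset.card ≤ Multiset.card P.roots := Multiset.toFinset_card_le _
      _ ≤ P.natDegree := Polynomial.card_roots' P
      _ = q ^ 2 := hdegP
    have hTeq : T = P.roots.toFinset :=
      Finset.eq_of_subset_of_card_le hTsub (by rw [hTcard]; exact hrc)
    have hxr : x ∈ P.roots.toFinset := by
      rw [Multiset.mem_toFinset, mem_roots hP0]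
      show P.eval x = 0
      rw [hPdef]
      simp only [eval_sub, eval_pow, eval_X]
      rw [hx, sub_self]
    rw [← hTeq, hTdef, Finset.mem_image] at hxr
    obtain ⟨a, -, ha⟩ := hxr
    exact ⟨a, ha⟩
  -- the polynomial h = ∏ (X - β^(Q^j)) has coefficients in F
  set e : ℕ → K := fun a => β ^ (q ^ 2) ^ a with hedef
  set u : ℕ → K[X] := fun j => X - C (e j) with hudef
  set h : K[X] := ∏ j ∈ Finset.range m, u j with hhdef
  have hperiod : ∀ a, e (a + m) = e a := by
    intro a
    rw [hedef]
    show β ^ (q ^ 2) ^ (a + m) = β ^ (q ^ 2) ^ a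
    rw [pow_add, mul_comm ((q ^ 2) ^ a), pow_mul, hQm]
  set χ₂ : K →+* K := iterateFrobenius K p (2 * k) with hχ₂def
  have hχ₂ : ∀ x : K, χ₂ x = x ^ q ^ 2 := fun x => by
    rw [hχ₂def, iterateFrobenius_def, hpow2]
  have hmaph : h.map χ₂ = h := by
    have h13 : h.map χ₂ = ∏ j ∈ Finset.range m, (X - C (e (j + 1))) := by
      rw [hhdef, Polynomial.map_prod]
      apply Finset.prod_congr rfl
      intro j _
      rw [hudef]
      show (X - C (e j)).map χ₂ = _
      rw [Polynomial.map_sub, map_X, map_C, hχ₂]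
      congr 2
      rw [hedef]
      show (β ^ (q ^ 2) ^ j) ^ q ^ 2 = β ^ (q ^ 2) ^ (j + 1)
      exact (calc β ^ (q ^ 2) ^ (j + 1) = β ^ ((q ^ 2) ^ j * q ^ 2) :=
                congrArg (fun t => β ^ t) (pow_succ (q ^ 2) j)
            _ = (β ^ (q ^ 2) ^ j) ^ q ^ 2 := pow_mul β _ _).symm
    have h14 : u 0 * ∏ j ∈ Finset.range m, (X - C (e (j + 1))) = u 0 * h := by
      have h15 : ∏ j ∈ Finset.range (m + 1), u j
          = (∏ j ∈ Finset.range m, u (j + 1)) * u 0 := Finset.prod_range_succ' u m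
      have h16 : ∏ j ∈ Finset.range (m + 1), u j
          = (∏ j ∈ Finset.range m, u j) * u m := Finset.prod_range_succ u m
      have h17 : u m = u 0 := by
        rw [hudef]
        show X - C (e m) = X - C (e 0)
        have := hperiod 0
        rw [zero_add] at this
        rw [this]
      have h18 : ∀ j, u (j + 1) = X - C (e (j + 1)) := fun j => rfl
      simp only [h18] at h15
      rw [h17] at h16
      rw [mul_comm (u 0), mul_comm (u 0), ← h15, h16, hhdef]
    have hu0 : u 0 ≠ 0 := by
      rw [hudef]
      exact Polynomial.X_sub_C_ne_zero (e 0)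
    have := mul_left_cancel₀ hu0 (by rw [h14] : u 0 * ∏ j ∈ Finset.range m, (X - C (e (j + 1))) = u 0 * h)
    rw [h13, this]
  have hcoef : ∀ t, h.coeff t ∈ Set.range (algebraMap F K) := by
    intro t
    apply hfix
    have h19 := congrArg (fun P : K[X] => P.coeff t) hmaph
    simp only [Polynomial.coeff_map, hχ₂] at h19
    exact h19
  obtain ⟨h₀, hh₀⟩ := (Polynomial.mem_lifts _).mp ((lifts_iff_coeff_lifts h).mpr hcoef)
  have hβh₀ : (Polynomial.aeval β) h₀ = 0 := by
    rw [aeval_def, ← eval_map, hh₀, hhdef, eval_prod]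
    apply Finset.prod_eq_zero (Finset.mem_range.mpr hm0)
    rw [hudef]
    show Polynomial.eval β (X - C (e 0)) = 0
    rw [eval_sub, eval_X, eval_C, hedef]
    show β - β ^ (q ^ 2) ^ 0 = 0
    rw [pow_zero, pow_one, sub_self]
  have hfh : f.map (algebraMap F K) ∣ h := by
    rw [← hh₀]
    exact Polynomial.map_dvd _ (minpoly.dvd F β hβh₀)
  -- every root of f is of the form β^(Q^j)
  have horbit : ∀ x : K, (Polynomial.aeval x) f = 0 → ∃ j : ℕ, x = β ^ (q ^ 2) ^ j := by
    intro x hx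
    have hxh : Polynomial.eval x h = 0 := by
      obtain ⟨c, hc⟩ := hfh
      rw [hc, eval_mul]
      have : Polynomial.eval x (f.map (algebraMap F K)) = 0 := by
        rw [eval_map, ← aeval_def, hx]
      rw [this, zero_mul]
    rw [hhdef, eval_prod] at hxh
    obtain ⟨j, hj, hj0⟩ := Finset.prod_eq_zero_iff.mp hxh
    refine ⟨j, ?_⟩
    rw [hudef] at hj0
    simp only [eval_sub, eval_X, eval_C] at hj0
    have := sub_eq_zero.mp hj0
    rw [this, hedef]
  -- bridge between γ = β^(Q^j) and the ZMod n condition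
  have hbridge : ∀ j : ℕ,
      γ = β ^ (q ^ 2) ^ j ↔
        -((q : ZMod n) * (i : ZMod n)) = (i : ZMod n) * (q : ZMod n) ^ (2 * j) := by
    intro j
    have hβQj : β ^ (q ^ 2) ^ j = α ^ (i * (q ^ 2) ^ j) := by rw [hβdef, ← pow_mul]
    have hβq : β ^ q = α ^ (i * q) := by rw [hβdef, ← pow_mul]
    constructor
    · intro hg
      have h20 : β ^ (q ^ 2) ^ j * β ^ q = 1 := by
        rw [← hg, hγdef, inv_mul_cancel₀ hβq0]
      rw [hβQj, hβq, ← pow_add] at h20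
      have h21 : n ∣ i * (q ^ 2) ^ j + i * q := (hα.pow_eq_one_iff_dvd _).mp h20
      have h22 : ((i * (q ^ 2) ^ j + i * q : ℕ) : ZMod n) = 0 :=
        (ZMod.natCast_eq_zero_iff _ _).mpr h21
      push_cast at h22
      have h23 : ((q : ZMod n) ^ 2) ^ j = (q : ZMod n) ^ (2 * j) := by rw [← pow_mul]
      rw [h23] at h22
      linear_combination -h22
    · intro hz
      have h22 : ((i * (q ^ 2) ^ j + i * q : ℕ) : ZMod n) = 0 := by
        push_cast
        have h23 : ((q : ZMod n) ^ 2) ^ j = (q : ZMod n) ^ (2 * j) := by rw [← pow_mul]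
        rw [h23]
        linear_combination -hz
      have h21 : n ∣ i * (q ^ 2) ^ j + i * q :=
        (ZMod.natCast_eq_zero_iff _ _).mp h22
      have h20 : α ^ (i * (q ^ 2) ^ j + i * q) = 1 := (hα.pow_eq_one_iff_dvd _).mpr h21
      rw [pow_add, ← hβQj, ← hβq] at h20
      rw [hγdef]
      exact (eq_inv_of_mul_eq_one_left h20).symm
  -- bridge between set equality and the existence condition
  have hsetiff :
      (cycCoset q n i =
          {x : ZMod n | ∃ j : ℕ,
            x = -((q : ZMod n) * (i : ZMod n)) * (q : ZMod n) ^ (2 * j)}) ↔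
        ∃ j : ℕ, -((q : ZMod n) * (i : ZMod n)) = (i : ZMod n) * (q : ZMod n) ^ (2 * j) := by
    constructor
    · intro hs
      have hmem : -((q : ZMod n) * (i : ZMod n)) ∈
          {x : ZMod n | ∃ j : ℕ,
            x = -((q : ZMod n) * (i : ZMod n)) * (q : ZMod n) ^ (2 * j)} :=
        ⟨0, by rw [mul_zero, pow_zero, mul_one]⟩
      rw [← hs] at hmem
      exact hmem
    · rintro ⟨j0, hj0⟩
      ext x
      simp only [cycCoset, Set.mem_setOf_eq]
      constructor
      · rintro ⟨j, rfl⟩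
        refine ⟨j + j0 * (m - 1), ?_⟩
        rw [hj0]
        have hmpos : 1 ≤ m := hm0
        have hexp : 2 * j0 + 2 * (j + j0 * (m - 1)) = 2 * j + m * (2 * j0) := by
          have h24 : m - 1 + 1 = m := Nat.succ_pred_eq_of_pos hm0
          nlinarith [h24]
        rw [mul_assoc, ← pow_add, hexp, pow_add, pow_mul, pow_mul, hTq, one_pow, mul_one]
      · rintro ⟨j, rfl⟩
        refine ⟨j0 + j, ?_⟩
        rw [hj0, mul_assoc, ← pow_add, mul_add]
  -- main equivalence
  rw [hsetiff]
  constructor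
  · rintro ⟨-, -, heq⟩
    have hγf : (Polynomial.aeval γ) f = 0 := by rw [heq]; exact key1
    obtain ⟨j, hj⟩ := horbit γ hγf
    exact ⟨j, (hbridge j).mp hj⟩
  · rintro ⟨j0, hj0⟩
    have hγj : γ = β ^ (q ^ 2) ^ j0 := (hbridge j0).mpr hj0
    have hγf : (Polynomial.aeval γ) f = 0 := by rw [hγj]; exact hrootpow j0
    refine ⟨hmon, hirr, ?_⟩
    have hfeq : f = minpoly F γ := minpoly.eq_of_irreducible_of_monic hirr hγf hmon
    have hdvd : f ∣ cdagger q f := by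
      have hdd := minpoly.dvd F γ key1
      rwa [← hfeq] at hdd
    exact monic_dvd_eq_aux hmon hcdm hdvd (le_of_eq hcddeg)
end

section
/- Let q be a prime power and n a positive integer with gcd(n,q)=1. Then the number of SCRIM factors of x^n − 1 over F_{q^2} is |Ω_{q^2,n}| = Σ_{d | n} λ(q,d) · φ(d)/ord_d(q^2), where λ(q,d) = 1 if d divides q^e + 1 for some odd positive integer e and λ(q,d) = 0 otherwise, and φ is Euler's totient function. -/
open Polynomial

/-!
A monic irreducible factor `f` of `X ^ n - 1` over `F = 𝔽_{q²}` divides the `d`-th cyclotomic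
polynomial for exactly one `d ∣ n`, and it is the minimal polynomial of a primitive `d`-th root of
unity `x` in the finite field `F[X]/(f)`. The roots of `f` are the Frobenius conjugates
`x ^ (q ^ 2) ^ i` and those of `f†` are the `(y ^ q)⁻¹` for roots `y` of `f`, so `f = f†` iff
`(x ^ q)⁻¹ = x ^ (q ^ 2) ^ i` for some `i`, i.e. `d ∣ q ^ (2 i) + q`; as `d` is coprime to `q`
this says `d ∣ q ^ e + 1` for an odd `e`. The criterion depends on `d` only, and the `d`-th
cyclotomic polynomial has `φ(d) / ord_d(q²)` monic irreducible factors.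
-/

theorem exists_dvd_sq_pow_add_iff {d q : ℕ} (h : d.Coprime q) :
    (∃ i, d ∣ (q ^ 2) ^ i + q) ↔ ∃ e, Odd e ∧ d ∣ q ^ e + 1 := by
  have key : ∀ j, (q ^ 2) ^ (j + 1) + q = q * (q ^ (2 * j + 1) + 1) := fun j => by ring
  constructor
  · rintro ⟨_ | j, hi⟩
    · exact ⟨1, odd_one, by simpa [add_comm] using hi⟩
    · exact ⟨2 * j + 1, odd_two_mul_add_one j, h.dvd_of_dvd_mul_left (key j ▸ hi)⟩
  · rintro ⟨_, ⟨j, rfl⟩, he⟩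
    exact ⟨j + 1, key j ▸ he.mul_left q⟩

theorem inv_pow_eq_pow_iff_orderOf_dvd {G₀ : Type*} [GroupWithZero G₀] {x : G₀} (hx : x ≠ 0)
    (m q : ℕ) : (x ^ q)⁻¹ = x ^ m ↔ orderOf x ∣ m + q := by
  rw [orderOf_dvd_iff_pow_eq_one, add_comm, pow_add, mul_eq_one_iff_inv_eq₀ (pow_ne_zero _ hx)]

section Conjugation

variable {F : Type*} [Field F] (p k : ℕ) [ExpChar F p]

theorem cdagger_eq_map_crecip (f : F[X]) :
    cdagger (p ^ k) f = (crecip f).map (iterateFrobenius F p k) := by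
  simp only [cdagger, map, eval₂_eq_sum, RingHom.comp_apply, iterateFrobenius_def]

theorem crecip_monic {f : F[X]} (h0 : f.coeff 0 ≠ 0) : (crecip f).Monic := by
  rw [crecip, Monic, leadingCoeff_mul, leadingCoeff_C, reverse_leadingCoeff,
    trailingCoeff_eq_coeff_zero h0, inv_mul_cancel₀ h0]

theorem natDegree_crecip_le (f : F[X]) : (crecip f).natDegree ≤ f.natDegree :=
  (natDegree_C_mul_le _ _).trans (reverse_natDegree_le f)

theorem cdagger_monic {f : F[X]} (h0 : f.coeff 0 ≠ 0) : (cdagger (p ^ k) f).Monic := by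
  rw [cdagger_eq_map_crecip]
  exact (crecip_monic h0).map _

theorem natDegree_cdagger_le (f : F[X]) : (cdagger (p ^ k) f).natDegree ≤ f.natDegree := by
  rw [cdagger_eq_map_crecip, natDegree_map]
  exact natDegree_crecip_le f

theorem aeval_cdagger_eq_zero_iff {L : Type*} [Field L] [Algebra F L] [ExpChar L p] {f : F[X]}
    (h0 : f.coeff 0 ≠ 0) {x : L} (hx : x ≠ 0) :
    aeval (x ^ p ^ k)⁻¹ (cdagger (p ^ k) f) = 0 ↔ aeval x f = 0 := by
  have : Invertible x := invertibleOfNonzero hx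
  -- `f†((x ^ q)⁻¹) = (f*(x⁻¹)) ^ q`, and `f*(x⁻¹) = 0 ↔ f(x) = 0`
  have hcomm : (algebraMap F L).comp (iterateFrobenius F p k) =
      (iterateFrobenius L p k).comp (algebraMap F L) := by
    ext a; simp [iterateFrobenius_def]
  rw [cdagger_eq_map_crecip, aeval_def, eval₂_map, hcomm, ← inv_pow, ← iterateFrobenius_def p k,
    ← hom_eval₂, map_eq_zero_iff _ (iterateFrobenius L p k).injective, crecip, eval₂_mul, eval₂_C,
    mul_eq_zero, aeval_def, ← invOf_eq_inv x, eval₂_reverse_eq_zero_iff]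
  simp [h0]

end Conjugation

section FiniteField

variable {F L : Type*} [Field F] [Finite F] [Field L] [Finite L] [Algebra F L]

theorem aeval_minpoly_eq_zero_iff_exists_pow (x y : L) :
    aeval y (minpoly F x) = 0 ↔ ∃ i, y = x ^ Nat.card F ^ i := by
  constructor
  · intro hy
    obtain ⟨σ, rfl⟩ := minpoly.exists_algEquiv_of_root' (Algebra.IsAlgebraic.isAlgebraic x) hy
    obtain ⟨p, _⟩ := CharP.exists F
    have : Fact p.Prime := ⟨CharP.char_is_prime F p⟩
    obtain ⟨i, hi⟩ := FiniteField.exists_forall_apply_eq_pow F p L σ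
    exact ⟨i, hi x⟩
  · rintro ⟨i, rfl⟩
    have := Fintype.ofFinite F
    have hfrob : x ^ Nat.card F ^ i = (FiniteField.frobeniusAlgEquivOfAlgebraic F L ^ i) x := by
      rw [AlgEquiv.coe_pow, FiniteField.coe_frobeniusAlgEquivOfAlgebraic_iterate,
        Nat.card_eq_fintype_card]
    rw [hfrob, ← minpoly.algEquiv_eq (FiniteField.frobeniusAlgEquivOfAlgebraic F L ^ i) x]
    exact minpoly.aeval F _

end FiniteField

theorem minpoly_eq_cdagger_iff {F L : Type*} [Field F] [Finite F] [Field L] [Finite L]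
    [Algebra F L] (p k : ℕ) [ExpChar F p] [ExpChar L p] {x : L} (hx : x ≠ 0) :
    minpoly F x = cdagger (p ^ k) (minpoly F x) ↔ ∃ i, (x ^ p ^ k)⁻¹ = x ^ Nat.card F ^ i := by
  rw [← aeval_minpoly_eq_zero_iff_exists_pow]
  have hint : IsIntegral F x := Algebra.IsIntegral.isIntegral x
  have h0 := minpoly.coeff_zero_ne_zero hint hx
  have hdag : aeval (x ^ p ^ k)⁻¹ (cdagger (p ^ k) (minpoly F x)) = 0 :=
    (aeval_cdagger_eq_zero_iff p k h0 hx).2 (minpoly.aeval F x)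
  refine ⟨fun h => h ▸ hdag, fun hy => ?_⟩
  have hmin : minpoly F x = minpoly F (x ^ p ^ k)⁻¹ :=
    minpoly.eq_of_irreducible_of_monic (minpoly.irreducible hint) hy (minpoly.monic hint)
  have hdvd := minpoly.dvd F _ hdag
  rw [← hmin] at hdvd
  exact (eq_of_monic_of_dvd_of_natDegree_le (minpoly.monic hint) (cdagger_monic p k h0) hdvd
    (natDegree_cdagger_le p k _)).symm

theorem neZero_natCast_of_coprime {R : Type*} [AddMonoidWithOne R] {p d : ℕ} [Fact p.Prime]
    [CharP R p] (hd : d.Coprime p) : NeZero (d : R) :=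
  .of_not_dvd R ((Nat.Prime.coprime_iff_not_dvd Fact.out).1 hd.symm)

theorem isPrimitiveRoot_root_of_dvd_cyclotomic {F : Type*} [Field F] {f : F[X]}
    [Fact (Irreducible f)] {d : ℕ} [NeZero (d : F)] (hf : f ∣ cyclotomic d F) :
    IsPrimitiveRoot (AdjoinRoot.root f) d := by
  have : NeZero (d : AdjoinRoot f) :=
    ⟨by simpa using (map_ne_zero (algebraMap F (AdjoinRoot f))).2 (NeZero.ne (d : F))⟩
  rw [← isRoot_cyclotomic_iff]
  simpa using (AdjoinRoot.isRoot_root f).dvd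
    (by simpa using map_dvd (algebraMap F (AdjoinRoot f)) hf)

theorem eq_of_dvd_cyclotomic_of_dvd_cyclotomic {F : Type*} [Field F] {f : F[X]}
    (hirr : Irreducible f) {d d' : ℕ} [NeZero (d : F)] [NeZero (d' : F)]
    (h : f ∣ cyclotomic d F) (h' : f ∣ cyclotomic d' F) : d = d' := by
  have : Fact (Irreducible f) := ⟨hirr⟩
  exact (isPrimitiveRoot_root_of_dvd_cyclotomic h).unique
    (isPrimitiveRoot_root_of_dvd_cyclotomic h')

theorem irreducible_dvd_X_pow_sub_one_iff {F : Type*} [Field F] {n : ℕ} (hn : 0 < n) {f : F[X]}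
    (hirr : Irreducible f) : f ∣ X ^ n - 1 ↔ ∃ d ∈ n.divisors, f ∣ cyclotomic d F := by
  rw [← prod_cyclotomic_eq_X_pow_sub_one hn, hirr.prime.dvd_finsetProd_iff]

theorem isSCRIM_iff_of_dvd_cyclotomic {F : Type*} [Field F] [Fintype F] {p k d : ℕ}
    [Fact p.Prime] [CharP F p] (hF : Fintype.card F = (p ^ k) ^ 2) (hd : d.Coprime p)
    {f : F[X]} (hmon : f.Monic) (hirr : Irreducible f) (hf : f ∣ cyclotomic d F) :
    IsSCRIM (p ^ k) f ↔ ∃ e, Odd e ∧ d ∣ (p ^ k) ^ e + 1 := by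
  have : Fact (Irreducible f) := ⟨hirr⟩
  have : NeZero (d : F) := neZero_natCast_of_coprime hd
  have : Module.Finite F (AdjoinRoot f) := hmon.finite_adjoinRoot
  have : Finite (AdjoinRoot f) := Module.finite_of_finite F
  have : CharP (AdjoinRoot f) p := charP_of_injective_algebraMap' F p
  have hprim := isPrimitiveRoot_root_of_dvd_cyclotomic hf
  have hmin : minpoly F (AdjoinRoot.root f) = f := by
    rw [AdjoinRoot.minpoly_root hirr.ne_zero, hmon.leadingCoeff, inv_one, C_1, mul_one]
  have hd0 : d ≠ 0 := fun h => NeZero.ne (d : F) (by simp [h])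
  rw [IsSCRIM, and_iff_right hmon, and_iff_right hirr, ← hmin,
    minpoly_eq_cdagger_iff p k (hprim.ne_zero hd0), Nat.card_eq_fintype_card, hF]
  simp_rw [inv_pow_eq_pow_iff_orderOf_dvd (hprim.ne_zero hd0), ← hprim.eq_orderOf]
  exact exists_dvd_sq_pow_add_iff (hd.pow_right k)

open UniqueFactorizationMonoid

open scoped Classical in
theorem scrimFactors_eq_biUnion {F : Type*} [Field F] [Fintype F] {p k n : ℕ} [Fact p.Prime]
    [CharP F p] (hF : Fintype.card F = (p ^ k) ^ 2) (hn : 0 < n)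
    (hnp : n.Coprime p) :
    scrimFactors F (p ^ k) n = ↑({d ∈ n.divisors | ∃ e, Odd e ∧ d ∣ (p ^ k) ^ e + 1}.biUnion
      fun d => (normalizedFactors (cyclotomic d F)).toFinset) := by
  ext f
  simp only [scrimFactors, Set.mem_ofPred_eq, Finset.coe_biUnion, Finset.coe_filter,
    Set.mem_iUnion, Multiset.mem_toFinset, Finset.mem_coe,
    Polynomial.mem_normalizedFactors_iff (cyclotomic_ne_zero _ F)]
  constructor
  · rintro ⟨hscrim, hdvd⟩
    obtain ⟨d, hd, hfd⟩ := (irreducible_dvd_X_pow_sub_one_iff hn hscrim.2.1).1 hdvd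
    have hdp : d.Coprime p := hnp.coprime_dvd_left (Nat.dvd_of_mem_divisors hd)
    exact ⟨d, ⟨hd, (isSCRIM_iff_of_dvd_cyclotomic hF hdp hscrim.1 hscrim.2.1 hfd).1 hscrim⟩,
      hscrim.2.1, hscrim.1, hfd⟩
  · rintro ⟨d, ⟨hd, hodd⟩, hirr, hmon, hfd⟩
    have hdp : d.Coprime p := hnp.coprime_dvd_left (Nat.dvd_of_mem_divisors hd)
    exact ⟨(isSCRIM_iff_of_dvd_cyclotomic hF hdp hmon hirr hfd).2 hodd,
      (irreducible_dvd_X_pow_sub_one_iff hn hirr).2 ⟨d, hd, hfd⟩⟩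

open scoped Classical in
theorem pairwiseDisjoint_normalizedFactors_cyclotomic {F : Type*} [Field F] {p n : ℕ}
    [Fact p.Prime] [CharP F p] (hnp : n.Coprime p) :
    (n.divisors : Set ℕ).PairwiseDisjoint
      fun d => (normalizedFactors (cyclotomic d F)).toFinset := by
  intro d hd d' hd' hne
  have := neZero_natCast_of_coprime (R := F) (hnp.coprime_dvd_left (Nat.dvd_of_mem_divisors hd))
  have := neZero_natCast_of_coprime (R := F) (hnp.coprime_dvd_left (Nat.dvd_of_mem_divisors hd'))
  refine Finset.disjoint_left.2 fun f hf hf' => hne ?_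
  simp only [Multiset.mem_toFinset,
    Polynomial.mem_normalizedFactors_iff (cyclotomic_ne_zero _ F)] at hf hf'
  exact eq_of_dvd_cyclotomic_of_dvd_cyclotomic hf.1 hf.2.2 hf'.2.2

open scoped Classical in
theorem card_normalizedFactors_cyclotomic {F : Type*} [Field F] [Fintype F] {p k : ℕ}
    [Fact p.Prime] (hF : Fintype.card F = (p ^ k) ^ 2)
    {d : ℕ} (hd : d.Coprime p) :
    (normalizedFactors (cyclotomic d F)).toFinset.card =
      d.totient / orderOf (((p ^ k : ℕ) : ZMod d) ^ 2) := by
  rw [← pow_mul] at hF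
  convert normalizedFactors_cyclotomic_card hF hd.symm using 2
  rw [← orderOf_units, ZMod.coe_unitOfCoprime]
  simp only [pow_mul, Nat.cast_pow]

open scoped Classical in
theorem stmt1 {q n : ℕ} (hq : IsPrimePow q)
    {F : Type*} [Field F] [Fintype F] (hF : Fintype.card F = q ^ 2)
    (hn : 0 < n) (hgcd : Nat.Coprime n q) :
    (scrimFactors F q n).ncard =
      ∑ d ∈ n.divisors,
        if ∃ e : ℕ, Odd e ∧ d ∣ q ^ e + 1 then
          Nat.totient d / orderOf ((q : ZMod d) ^ 2)
        else 0 := by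
  obtain ⟨p, k, hp, hk, rfl⟩ := hq
  have : Fact p.Prime := ⟨hp.nat_prime⟩
  have : CharP F p := charP_of_card_eq_prime_pow (hF.trans (pow_mul p k 2).symm)
  have hnp : n.Coprime p := hgcd.coprime_dvd_right (dvd_pow_self p hk.ne')
  rw [scrimFactors_eq_biUnion hF hn hnp, Set.ncard_coe_finset,
    Finset.card_biUnion ((pairwiseDisjoint_normalizedFactors_cyclotomic hnp).subset
      (Finset.coe_subset.2 (Finset.filter_subset _ _))), Finset.sum_filter]
  refine Finset.sum_congr rfl fun d hd => ?_
  split_ifs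
  · exact card_normalizedFactors_cyclotomic hF (hnp.coprime_dvd_left (Nat.dvd_of_mem_divisors hd))
  · rfl
end

section
/- Let q be a prime power and let l be an odd prime not dividing q. Then every monic irreducible factor of x^l − 1 over F_{q^2} is SCRIM if and only if ord_l(q^2) is odd and ord_l(q) is even. -/
open Polynomial

lemma nt_lemma {l : ℕ} (hl : l.Prime) (hlodd : Odd l) {u : ZMod l} (hu : u ≠ 0) :
    (∃ j : ℕ, (u ^ 2) ^ j = -u) ↔ (Odd (orderOf (u ^ 2)) ∧ Even (orderOf u)) := by
  haveI : Fact l.Prime := ⟨hl⟩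
  have hl2 : l ≠ 2 := fun h => by subst h; exact (by decide : ¬ Odd 2) hlodd
  have hne : (-1 : ZMod l) ≠ 1 := by
    intro h
    have h2 : ((2:ℕ) : ZMod l) = 0 := by push_cast; linear_combination -h
    have hdvd : l ∣ 2 := (ZMod.natCast_eq_zero_iff 2 l).1 h2
    exact hl2 ((Nat.prime_dvd_prime_iff_eq hl Nat.prime_two).1 hdvd)
  have hfin : IsOfFinOrder u := isOfFinOrder_iff_pow_eq_one.2
    ⟨l - 1, by have := hl.two_le; omega, ZMod.pow_card_sub_one_eq_one hu⟩
  have hdpos : 0 < orderOf u := hfin.orderOf_pos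
  have he : orderOf (u ^ 2) = orderOf u / Nat.gcd (orderOf u) 2 := hfin.orderOf_pow (n := 2)
  have hord_neg_one : orderOf (-1 : ZMod l) = 2 :=
    orderOf_eq_prime (by ring) hne
  constructor
  · rintro ⟨j, hj⟩
    obtain ⟨d', hd'⟩ : ∃ d', orderOf u = d' + 1 := ⟨orderOf u - 1, by omega⟩
    have hum : u ^ (2 * j + d') = -1 := by
      refine mul_right_cancel₀ hu ?_
      have h2 : u ^ (2*j+d') * u = (u^2)^j * u ^ (orderOf u) := by rw [hd']; ring
      rw [h2, pow_orderOf_eq_one u, hj]; ring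
    have h2 : orderOf u / Nat.gcd (orderOf u) (2*j+d') = 2 := by
      rw [← hfin.orderOf_pow (n := 2*j+d'), hum, hord_neg_one]
    set g := Nat.gcd (orderOf u) (2*j+d') with hg
    have hgdvd : g ∣ orderOf u := Nat.gcd_dvd_left _ _
    have hgdvd2 : g ∣ 2*j+d' := Nat.gcd_dvd_right _ _
    have hgpos : 0 < g := Nat.gcd_pos_of_pos_left _ hdpos
    have hdeq : orderOf u = 2 * g := by
      obtain ⟨c, hc⟩ := hgdvd
      rw [hc, Nat.mul_div_cancel_left _ hgpos] at h2
      rw [h2] at hc; omega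
    have heven : Even (orderOf u) := ⟨g, by omega⟩
    have hdodd' : Odd d' := by
      rcases Nat.even_or_odd d' with h | h
      · exfalso; obtain ⟨a, ha⟩ := h; omega
      · exact h
    have hmodd : Odd (2*j + d') := by
      obtain ⟨a, ha⟩ := hdodd'; exact ⟨j + a, by omega⟩
    have hgodd : Odd g := by
      rcases Nat.even_or_odd g with h | h
      · exfalso
        obtain ⟨c, hc⟩ := hgdvd2
        have h4 : Even (2*j+d') := hc ▸ h.mul_right c
        exact (Nat.not_even_iff_odd.2 hmodd) h4
      · exact h
    refine ⟨?_, heven⟩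
    have hgcd2 : Nat.gcd (orderOf u) 2 = 2 :=
      Nat.dvd_antisymm (Nat.gcd_dvd_right _ _) (Nat.dvd_gcd ⟨g, hdeq⟩ dvd_rfl)
    rw [he, hgcd2, hdeq, Nat.mul_div_cancel_left _ (by norm_num)]
    exact hgodd
  · rintro ⟨hodd, heven⟩
    obtain ⟨t, ht⟩ := heven
    have hgcd2 : Nat.gcd (orderOf u) 2 = 2 :=
      Nat.dvd_antisymm (Nat.gcd_dvd_right _ _) (Nat.dvd_gcd ⟨t, by omega⟩ dvd_rfl)
    have heval : orderOf (u^2) = t := by rw [he, hgcd2]; omega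
    have htpos : 0 < t := by omega
    have hue : (u ^ t) * (u ^ t) = 1 := by
      rw [← pow_add, (by omega : t + t = orderOf u), pow_orderOf_eq_one]
    have hne1 : u ^ t ≠ 1 := by
      intro h
      have := Nat.le_of_dvd htpos (orderOf_dvd_of_pow_eq_one h)
      omega
    have hminus : u ^ t = -1 := (mul_self_eq_one_iff.1 hue).resolve_left hne1
    obtain ⟨k, hk⟩ := heval ▸ hodd
    refine ⟨k + 1, ?_⟩
    have h3 : (u^2)^(k+1) = u ^ t * u := by rw [← pow_mul, ← pow_succ]; congr 1; omega
    rw [h3, hminus]; ring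

lemma cdagger_eq_map {F : Type*} [Field F] {p n q : ℕ} [hp : Fact p.Prime] [CharP F p]
    (hpn : p ^ n = q) (f : F[X]) :
    cdagger q f = (crecip f).map (iterateFrobenius F p n) := by
  have h2 : (crecip f).map (iterateFrobenius F p n)
      = (crecip f).sum fun e a => C (iterateFrobenius F p n a) * X ^ e := by
    rw [Polynomial.map, eval₂_eq_sum]; rfl
  rw [cdagger, h2]
  unfold Polynomial.sum
  exact Finset.sum_congr rfl fun i _ => by simp only [iterateFrobenius_def, hpn]

lemma scrim_aux {F : Type*} [Field F] {p n q l : ℕ} [hp : Fact p.Prime] [CharP F p]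
    (hpn : p ^ n = q) (hl : 0 < l)
    (f : F[X]) [hfact : Fact (Irreducible f)] (hm : f.Monic) (hi : Irreducible f)
    (hdvd : f ∣ X ^ l - 1) :
    f = cdagger q f ↔ (aeval (((AdjoinRoot.root f) ^ q)⁻¹) f = 0) := by
  set K := AdjoinRoot f with hK
  set α := AdjoinRoot.root f with hα
  haveI : CharP K p := charP_of_injective_algebraMap (algebraMap F K).injective p
  have hroot : aeval α f = 0 := by
    rw [aeval_def, AdjoinRoot.algebraMap_eq]; exact AdjoinRoot.eval₂_root f
  have hαl : α ^ l = 1 := by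
    obtain ⟨g, hg⟩ := hdvd
    have h0 : aeval α (X ^ l - 1 : F[X]) = 0 := by
      rw [hg, map_mul, hroot, zero_mul]
    simpa [sub_eq_zero] using h0
  have hα0 : α ≠ 0 := by
    intro h
    rw [h, zero_pow hl.ne'] at hαl
    exact zero_ne_one hαl
  have hc0 : f.coeff 0 ≠ 0 := by
    intro h
    have h1 : (X : F[X]) ∣ X ^ l - 1 := (X_dvd_iff.2 h).trans hdvd
    have h2 := X_dvd_iff.1 h1
    rw [coeff_sub, coeff_X_pow, if_neg (by omega : ¬ (0 = l))] at h2
    simp at h2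
  set σ := iterateFrobenius F p n with hσ
  set τ := iterateFrobenius K p n with hτ
  have hcomp : (algebraMap F K).comp σ = τ.comp (algebraMap F K) := by
    ext a
    simp [hσ, hτ, iterateFrobenius_def, map_pow]
  have hαq : α ^ q ≠ 0 := pow_ne_zero _ hα0
  letI : Invertible (α ^ q) := invertibleOfNonzero hαq
  have hβ : ⅟ (α ^ q) = (α ^ q)⁻¹ := invOf_eq_inv _
  have hdag : aeval ((α ^ q)⁻¹) (cdagger q f) = 0 := by
    rw [cdagger_eq_map hpn, aeval_def, eval₂_map, hcomp]
    rw [crecip, eval₂_mul, ← hβ]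
    have h3 : eval₂ (τ.comp (algebraMap F K)) (⅟ (α ^ q)) f.reverse = 0 := by
      rw [eval₂_reverse_eq_zero_iff]
      have h4 : τ α = α ^ q := by rw [hτ, iterateFrobenius_def, hpn]
      rw [← h4, ← hom_eval₂, ← aeval_def, hroot, map_zero]
    rw [h3, mul_zero]
  constructor
  · intro h
    exact (congrArg (aeval ((α ^ q)⁻¹)) h).trans hdag
  · intro h
    haveI : Module.Finite F K := PowerBasis.finite (AdjoinRoot.powerBasis hi.ne_zero)
    have hmin : minpoly F ((α ^ q)⁻¹) = f := (minpoly.eq_of_irreducible_of_monic hi h hm).symm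
    have hdvd2 : minpoly F ((α ^ q)⁻¹) ∣ cdagger q f := minpoly.dvd F _ hdag
    rw [hmin] at hdvd2
    have hrevmonic : (crecip f).Monic := by
      have htr : f.natTrailingDegree = 0 := natTrailingDegree_eq_zero.2 (Or.inr hc0)
      have h5 : f.reverse.leadingCoeff = f.coeff 0 := by
        rw [reverse_leadingCoeff, trailingCoeff, htr]
      have : (crecip f).leadingCoeff = 1 := by
        rw [crecip, leadingCoeff_mul, leadingCoeff_C, h5, inv_mul_cancel₀ hc0]
      exact this
    have hmonic : (cdagger q f).Monic := by
      rw [cdagger_eq_map hpn]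
      exact hrevmonic.map _
    have hdeg : (cdagger q f).natDegree ≤ f.natDegree := by
      rw [cdagger_eq_map hpn]
      refine le_trans natDegree_map_le ?_
      rw [crecip]
      exact le_trans (natDegree_C_mul_le _ _) (reverse_natDegree_le f)
    exact (eq_of_monic_of_dvd_of_natDegree_le hm hmonic hdvd2 hdeg).symm

lemma charF {F : Type*} [Field F] [Fintype F] {p m : ℕ} (hp : p.Prime) (hm : 0 < m)
    (hcard : Fintype.card F = p ^ m) : CharP F p := by
  obtain ⟨p', hp'⟩ := CharP.exists F
  haveI := hp'
  obtain ⟨n', hp'prime, hcard'⟩ := FiniteField.card F p'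
  have hpp' : p' = p := by
    have h1 : p' ∣ p ^ m := by
      rw [← hcard, hcard']
      exact dvd_pow_self p' n'.ne_zero
    exact (Nat.prime_dvd_prime_iff_eq hp'prime hp).1 (hp'prime.dvd_of_dvd_pow h1)
  rw [← hpp']
  exact hp'

lemma aeval_root_pow_pow {F : Type*} [Field F] [Fintype F] {K : Type*} [Field K] [Algebra F K]
    {p n r : ℕ} [Fact p.Prime] [CharP K p] (hpn : p ^ n = r) (hcard : Fintype.card F = r)
    (f : F[X]) {x : K} (hx : aeval x f = 0) (j : ℕ) : aeval (x ^ r ^ j) f = 0 := by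
  have key : ∀ y : K, aeval y f = 0 → aeval (y ^ r) f = 0 := by
    intro y hy
    have hcomp : (iterateFrobenius K p n).comp (algebraMap F K) = algebraMap F K := by
      ext a
      simp only [RingHom.comp_apply, iterateFrobenius_def]
      rw [← map_pow, hpn, ← hcard, FiniteField.pow_card]
    have h := hom_eval₂ f (algebraMap F K) (iterateFrobenius K p n) y
    rw [← aeval_def, hy, map_zero, hcomp] at h
    have hτy : (iterateFrobenius K p n) y = y ^ r := by rw [iterateFrobenius_def, hpn]
    rw [hτy] at h
    rw [aeval_def]
    exact h.symm
  induction j with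
  | zero => simpa using hx
  | succ k ih =>
    have h2 := key _ ih
    rw [← pow_mul, ← pow_succ] at h2
    exact h2

lemma pow_eq_pow_iff_modEq₀ {K : Type*} [GroupWithZero K] {a : K} (ha : a ≠ 0) {m k : ℕ} :
    a ^ m = a ^ k ↔ m ≡ k [MOD orderOf a] := by
  have horder' : orderOf (Units.mk0 a ha) = orderOf a := by
    rw [← orderOf_units, Units.val_mk0]
  constructor
  · intro h
    have h2 : (Units.mk0 a ha) ^ m = (Units.mk0 a ha) ^ k :=
      Units.ext (by simpa using h)
    rw [pow_eq_pow_iff_modEq, horder'] at h2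
    exact h2
  · intro h
    have h2 : (Units.mk0 a ha) ^ m = (Units.mk0 a ha) ^ k := by
      rw [pow_eq_pow_iff_modEq, horder']; exact h
    have h3 := congrArg Units.val h2
    simpa using h3

theorem stmt2 {q l : ℕ} (hq : IsPrimePow q)
    {F : Type*} [Field F] [Fintype F] (hF : Fintype.card F = q ^ 2)
    (hl : l.Prime) (hlodd : Odd l) (hlq : ¬ l ∣ q) :
    (∀ f : F[X], f.Monic → Irreducible f → f ∣ X ^ l - 1 → IsSCRIM q f) ↔
      Odd (orderOf ((q : ZMod l) ^ 2)) ∧ Even (orderOf (q : ZMod l)) := by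
  obtain ⟨p, n, hpp', hn, hpn⟩ := hq
  have hpp : p.Prime := hpp'.nat_prime
  haveI : Fact p.Prime := ⟨hpp⟩
  haveI : Fact l.Prime := ⟨hl⟩
  have hq2 : Fintype.card F = p ^ (2*n) := by rw [hF, ← hpn]; ring
  haveI : CharP F p := charF hpp (by omega) hq2
  have hlpos : 0 < l := hl.pos
  have hu : (q : ZMod l) ≠ 0 := fun h => hlq ((ZMod.natCast_eq_zero_iff q l).1 h)
  have hpn2 : p ^ (2*n) = q^2 := by rw [← hpn]; ring
  rw [← nt_lemma hl hlodd hu]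
  constructor
  · intro H
    -- find an irreducible factor with a primitive root
    have hgeom : (∑ i ∈ Finset.range l, (X : F[X]) ^ i) * (X - 1) = X ^ l - 1 := geom_sum_mul X l
    set G : F[X] := ∑ i ∈ Finset.range l, (X : F[X]) ^ i with hG
    have hGmonic : G.Monic := monic_geom_sum_X hlpos.ne'
    have hXl : (X ^ l - 1 : F[X]).natDegree = l := by
      have : (X ^ l - 1 : F[X]) = X ^ l - C 1 := by rw [map_one]
      rw [this, natDegree_X_pow_sub_C]
    have hGdeg : G.natDegree = l - 1 := by
      have h1 : G.natDegree + (X - 1 : F[X]).natDegree = l := by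
        rw [← natDegree_mul hGmonic.ne_zero (by
          intro h
          have := natDegree_X_sub_C (1 : F)
          rw [map_one] at this
          rw [h] at this; simp at this), hgeom, hXl]
      have h2 : (X - 1 : F[X]).natDegree = 1 := by
        have := natDegree_X_sub_C (1 : F)
        rwa [map_one] at this
      omega
    have hGnotunit : ¬ IsUnit G := by
      have h3 : 3 ≤ l := by
        rcases hlodd with ⟨k, hk⟩
        have := hl.two_le
        omega
      exact not_isUnit_of_natDegree_pos G (by omega)
    obtain ⟨f, hm, hi, hfG⟩ := Polynomial.exists_monic_irreducible_factor G hGnotunit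
    have hdvd : f ∣ X ^ l - 1 := hfG.trans ⟨X - 1, hgeom.symm⟩
    haveI : Fact (Irreducible f) := ⟨hi⟩
    have hsc : f = cdagger q f := (H f hm hi hdvd).2.2
    have hβ0 : aeval (((AdjoinRoot.root f) ^ q)⁻¹) f = 0 :=
      (scrim_aux hpn hlpos f hm hi hdvd).1 hsc
    set K := AdjoinRoot f with hK
    set α := AdjoinRoot.root f with hα
    haveI : CharP K p := charP_of_injective_algebraMap (algebraMap F K).injective p
    have hroot : aeval α f = 0 := by
      rw [aeval_def, AdjoinRoot.algebraMap_eq]; exact AdjoinRoot.eval₂_root f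
    have hαl : α ^ l = 1 := by
      obtain ⟨g, hg⟩ := hdvd
      have h0 : aeval α (X ^ l - 1 : F[X]) = 0 := by rw [hg, map_mul, hroot, zero_mul]
      simpa [sub_eq_zero] using h0
    have hα0 : α ≠ 0 := by
      intro h
      rw [h, zero_pow hlpos.ne'] at hαl
      exact zero_ne_one hαl
    have hαG : aeval α G = 0 := by
      obtain ⟨h, hh⟩ := hfG
      rw [hh, map_mul, hroot, zero_mul]
    have hα1 : α ≠ 1 := by
      intro h
      rw [h, hG] at hαG
      simp only [map_sum, map_pow, aeval_X, one_pow, Finset.sum_const, Finset.card_range,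
        nsmul_eq_mul, mul_one] at hαG
      have h2 : p ∣ l := (CharP.cast_eq_zero_iff K p l).1 hαG
      have h3 : p = l := (Nat.prime_dvd_prime_iff_eq hpp hl).1 h2
      apply hlq
      rw [← h3, ← hpn]
      exact dvd_pow_self p (by omega)
    have horder : orderOf α = l := orderOf_eq_prime hαl hα1
    -- e := orderOf (u^2)
    set u : ZMod l := (q : ZMod l) with hudef
    have hufin : IsOfFinOrder (u^2) := isOfFinOrder_iff_pow_eq_one.2
      ⟨l - 1, by have := hl.two_le; omega, by
        rw [← pow_mul, mul_comm, pow_mul, ZMod.pow_card_sub_one_eq_one hu, one_pow]⟩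
    set e := orderOf (u^2) with he
    have hepos : 0 < e := hufin.orderOf_pos
    -- all of K satisfies x ^ (q^2)^e = x
    set N := 2 * n * e with hNdef
    have hNcard : p ^ N = (q^2)^e := by rw [← hpn2, ← pow_mul, hNdef]
    set ψ : K →+* K := iterateFrobenius K p N with hψ
    have hψdef : ∀ x : K, ψ x = x ^ (q^2)^e := fun x => by
      rw [hψ, iterateFrobenius_def, hNcard]
    have hmod : ((q^2)^e : ℕ) % l = 1 := by
      have hcast : (((q^2)^e : ℕ) : ZMod l) = ((1:ℕ) : ZMod l) := by
        push_cast
        exact pow_orderOf_eq_one (u^2)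
      have h1 := (ZMod.natCast_eq_natCast_iff _ _ _).1 hcast
      have h2 : (1 : ℕ) % l = 1 := Nat.mod_eq_of_lt hl.one_lt
      rw [Nat.ModEq, h2] at h1
      exact h1
    have hαψ : ψ α = α := by
      rw [hψdef]
      have hexp : (q^2)^e = l * ((q^2)^e / l) + 1 := by
        have h0 := Nat.div_add_mod ((q^2)^e) l
        omega
      rw [hexp, pow_add, pow_mul, hαl, one_pow, one_mul, pow_one]
    have htop : ∀ x : K, ψ x = x := by
      intro x
      let S : Subalgebra F K :=
        { carrier := {y : K | ψ y = y}
          mul_mem' := fun {a b} ha hb => by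
            simp only [Set.mem_setOf_eq, map_mul] at *
            rw [ha, hb]
          one_mem' := by simp [Set.mem_setOf_eq]
          add_mem' := fun {a b} ha hb => by
            simp only [Set.mem_setOf_eq, map_add] at *
            rw [ha, hb]
          zero_mem' := by simp [Set.mem_setOf_eq]
          algebraMap_mem' := fun a => by
            show ψ (algebraMap F K a) = algebraMap F K a
            rw [hψdef, ← map_pow]
            congr 1
            have : (q^2)^e = (Fintype.card F)^e := by rw [hF]
            rw [this]
            exact FiniteField.pow_card_pow e a }
      have h2 : (⊤ : Subalgebra F K) ≤ S := by
        rw [← AdjoinRoot.adjoinRoot_eq_top]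
        exact Algebra.adjoin_le (Set.singleton_subset_iff.2 hαψ)
      exact h2 (Algebra.mem_top)
    -- cardinality bound
    haveI : Module.Finite F K := PowerBasis.finite (AdjoinRoot.powerBasis hi.ne_zero)
    haveI : Finite K := Module.finite_of_finite F
    haveI : Fintype K := Fintype.ofFinite K
    have hfr : Module.finrank F K = f.natDegree := by
      have := (AdjoinRoot.powerBasis hi.ne_zero).finrank
      rw [this]
      rfl
    have hcardK : Fintype.card K = (q^2) ^ f.natDegree := by
      rw [Module.card_eq_pow_finrank (K := F) (V := K), hF, hfr]
    have hNnz : N ≠ 0 := by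
      have : 0 < n := hn
      simp only [hNdef]
      positivity
    have hne0 : ((X : K[X]) ^ p ^ N - X) ≠ 0 :=
      FiniteField.X_pow_card_pow_sub_X_ne_zero K hNnz hpp.one_lt
    have hcardle : Fintype.card K ≤ p ^ N := by
      have h1 : (Finset.univ : Finset K) ⊆ ((X : K[X]) ^ p ^ N - X).roots.toFinset := by
        intro x _
        rw [Multiset.mem_toFinset, mem_roots hne0]
        simp only [IsRoot, eval_sub, eval_pow, eval_X]
        rw [sub_eq_zero]
        have h3 := htop x
        rw [hψ, iterateFrobenius_def] at h3
        exact h3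
      calc Fintype.card K = (Finset.univ : Finset K).card := rfl
        _ ≤ ((X : K[X]) ^ p ^ N - X).roots.toFinset.card := Finset.card_le_card h1
        _ ≤ Multiset.card ((X : K[X]) ^ p ^ N - X).roots := Multiset.toFinset_card_le _
        _ ≤ ((X : K[X]) ^ p ^ N - X).natDegree := card_roots' _
        _ = p ^ N := FiniteField.X_pow_card_pow_sub_X_natDegree_eq K hNnz hpp.one_lt
    have hdegle : f.natDegree ≤ e := by
      rw [hcardK, hNcard] at hcardle
      have hq2gt : 1 < q^2 := by
        have : 1 < p ^ (2*n) := Nat.one_lt_pow (by omega) hpp.one_lt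
        omega
      exact (Nat.pow_le_pow_iff_right hq2gt).1 hcardle
    -- roots of f in K are exactly the orbit
    set g' : K[X] := f.map (algebraMap F K) with hg'
    have hg'0 : g' ≠ 0 := (Polynomial.map_ne_zero_iff (algebraMap F K).injective).2 hi.ne_zero
    have hiter : ∀ j : ℕ, aeval (α ^ (q^2) ^ j) f = 0 :=
      fun j => aeval_root_pow_pow hpn2 hF f hroot j
    have hmemroots : ∀ y : K, aeval y f = 0 ↔ y ∈ g'.roots := by
      intro y
      rw [hg', mem_roots_map hi.ne_zero, aeval_def]
    set O : Finset K := (Finset.range e).image (fun j => α ^ (q^2) ^ j) with hO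
    have hinj : Set.InjOn (fun j => α ^ (q^2) ^ j) (Finset.range e) := by
      intro i hi' j hj' hij
      simp only [Finset.coe_range, Set.mem_Iio] at hi' hj'
      have hij' : α ^ (q^2)^i = α ^ (q^2)^j := hij
      have h1 : (q^2)^i ≡ (q^2)^j [MOD l] := by
        rw [← horder]
        exact (pow_eq_pow_iff_modEq₀ hα0).1 hij'
      have h2 : ((q:ZMod l)^2)^i = ((q:ZMod l)^2)^j := by
        have h2' := (ZMod.natCast_eq_natCast_iff _ _ _).2 h1
        push_cast at h2'
        exact h2'
      have hu2 : (q:ZMod l)^2 ≠ 0 := pow_ne_zero _ hu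
      have h3 : i ≡ j [MOD e] := by
        rw [he]
        exact (pow_eq_pow_iff_modEq₀ hu2).1 h2
      have h4 : i % e = j % e := h3
      rw [Nat.mod_eq_of_lt hi', Nat.mod_eq_of_lt hj'] at h4
      exact h4
    have hOsub : O ⊆ g'.roots.toFinset := by
      intro y hy
      rw [hO, Finset.mem_image] at hy
      obtain ⟨k, hkr, rfl⟩ := hy
      rw [Multiset.mem_toFinset, ← hmemroots]
      exact hiter k
    have hOcard : O.card = e := by
      rw [hO, Finset.card_image_of_injOn hinj, Finset.card_range]
    have hRle : g'.roots.toFinset.card ≤ e := by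
      calc g'.roots.toFinset.card ≤ Multiset.card g'.roots := Multiset.toFinset_card_le _
        _ ≤ g'.natDegree := card_roots' _
        _ = f.natDegree := hm.natDegree_map _
        _ ≤ e := hdegle
    have hOR : O = g'.roots.toFinset :=
      Finset.eq_of_subset_of_card_le hOsub (by rw [hOcard]; exact hRle)
    have hβmem : ((α ^ q)⁻¹) ∈ O := by
      rw [hOR, Multiset.mem_toFinset, ← hmemroots]
      exact hβ0
    rw [hO, Finset.mem_image] at hβmem
    obtain ⟨j, hjmem, hje⟩ := hβmem
    refine ⟨j, ?_⟩
    have h1 : α ^ ((q^2)^j + q) = 1 := by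
      rw [pow_add, hje, inv_mul_cancel₀ (pow_ne_zero _ hα0)]
    have h2 : l ∣ (q^2)^j + q := by
      rw [← horder]; exact orderOf_dvd_of_pow_eq_one h1
    have h3 : (((q^2)^j + q : ℕ) : ZMod l) = 0 := (ZMod.natCast_eq_zero_iff _ _).2 h2
    push_cast at h3
    exact eq_neg_of_add_eq_zero_left h3
  · rintro ⟨j, hj⟩ f hm hi hdvd
    haveI : Fact (Irreducible f) := ⟨hi⟩
    refine ⟨hm, hi, (scrim_aux hpn hlpos f hm hi hdvd).2 ?_⟩
    set K := AdjoinRoot f with hK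
    set α := AdjoinRoot.root f with hα
    haveI : CharP K p := charP_of_injective_algebraMap (algebraMap F K).injective p
    have hroot : aeval α f = 0 := by
      rw [aeval_def, AdjoinRoot.algebraMap_eq]; exact AdjoinRoot.eval₂_root f
    have hαl : α ^ l = 1 := by
      obtain ⟨g, hg⟩ := hdvd
      have h0 : aeval α (X ^ l - 1 : F[X]) = 0 := by rw [hg, map_mul, hroot, zero_mul]
      simpa [sub_eq_zero] using h0
    have hα0 : α ≠ 0 := by
      intro h
      rw [h, zero_pow hlpos.ne'] at hαl
      exact zero_ne_one hαl
    have hordd : orderOf α ∣ l := orderOf_dvd_of_pow_eq_one hαl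
    have hiter : ∀ k : ℕ, aeval (α ^ (q^2) ^ k) f = 0 :=
      fun k => aeval_root_pow_pow hpn2 hF f hroot k
    have hdvdnat : l ∣ (q^2)^j + q := by
      have hc : (((q^2)^j + q : ℕ) : ZMod l) = 0 := by
        push_cast
        rw [hj]; ring
      exact (ZMod.natCast_eq_zero_iff _ l).1 hc
    have h1 : α ^ ((q^2)^j + q) = 1 :=
      orderOf_dvd_iff_pow_eq_one.1 (hordd.trans hdvdnat)
    have hβ : α ^ (q^2)^j = (α ^ q)⁻¹ := by
      apply eq_inv_of_mul_eq_one_left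
      rw [← pow_add]; exact h1
    rw [← hβ]
    exact hiter j
end

section
/- Let q be a prime power and let n_1 and n_2 be odd positive integers that are coprime to each other and to q. If x − 1 is the only SCRIM factor of x^{n_1} − 1 over F_{q^2} and x − 1 is the only SCRIM factor of x^{n_2} − 1 over F_{q^2}, then x − 1 is the only SCRIM factor of x^{n_1 n_2} − 1 over F_{q^2}. -/
open Polynomial

section Aux

variable {F : Type*} [Field F]

lemma cdagger_eq_map_s7 (p m : ℕ) [ExpChar F p] (f : F[X]) :
    cdagger (p ^ m) f = (crecip f).map (iterateFrobenius F p m) := by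
  unfold cdagger
  conv_rhs => rw [← sum_C_mul_X_pow_eq (crecip f)]
  rw [Polynomial.sum_def, Polynomial.sum_def, Polynomial.map_sum]
  simp [iterateFrobenius_def]

variable {K : Type*} [Field K] [Algebra F K]

lemma aeval_map_iterateFrobenius (p m : ℕ) [ExpChar F p] [ExpChar K p] (g : F[X]) (γ : K) :
    aeval (γ ^ p ^ m) (g.map (iterateFrobenius F p m)) = aeval γ g ^ p ^ m := by
  have hcomp : (algebraMap F K).comp (iterateFrobenius F p m)
      = (iterateFrobenius K p m).comp (algebraMap F K) := by
    ext a; simp [iterateFrobenius_def, map_pow]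
  rw [aeval_def, eval₂_map, hcomp]
  have : (γ ^ p ^ m) = iterateFrobenius K p m γ := rfl
  rw [this, ← hom_eval₂]
  simp [aeval_def, iterateFrobenius_def]

/-- roots of polynomials over `F` are closed under `x ↦ x ^ card F`. -/
lemma aeval_pow_card_eq_zero [Fintype F] (p e : ℕ) [ExpChar F p] [ExpChar K p] (hp0 : p ≠ 0)
    (hF : Fintype.card F = p ^ e) (g : F[X]) (γ : K) (h : aeval γ g = 0) :
    aeval (γ ^ p ^ e) g = 0 := by
  have hmap : g.map (iterateFrobenius F p e) = g := by
    have hid : iterateFrobenius F p e = RingHom.id F := by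
      ext a; simp only [iterateFrobenius_def, RingHom.id_apply, ← hF, FiniteField.pow_card]
    rw [hid, Polynomial.map_id]
  have := aeval_map_iterateFrobenius p e g γ
  rw [hmap, h] at this
  rw [this]
  exact zero_pow (pow_ne_zero _ hp0)

lemma aeval_pow_card_iter_eq_zero [Fintype F] (p e : ℕ) [ExpChar F p] [ExpChar K p] (hp0 : p ≠ 0)
    (hF : Fintype.card F = p ^ e) (g : F[X]) (γ : K) (h : aeval γ g = 0) (j : ℕ) :
    aeval (γ ^ (p ^ e) ^ j) g = 0 := by
  induction j with
  | zero => simpa using h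
  | succ j ih =>
      have := aeval_pow_card_eq_zero p e hp0 hF g (γ ^ (p ^ e) ^ j) ih
      rwa [← pow_mul, ← pow_succ] at this

end Aux

theorem stmt7 {q n₁ n₂ : ℕ} (hq : IsPrimePow q)
    {F : Type*} [Field F] [Fintype F] (hF : Fintype.card F = q ^ 2)
    (hn₁ : Odd n₁) (hn₂ : Odd n₂) (h12 : Nat.Coprime n₁ n₂)
    (h1q : Nat.Coprime n₁ q) (h2q : Nat.Coprime n₂ q)
    (hone₁ : scrimFactors F q n₁ = {X - 1})
    (hone₂ : scrimFactors F q n₂ = {X - 1}) :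
    scrimFactors F q (n₁ * n₂) = {X - 1} := by
  obtain ⟨p, m, hp, hm, rfl⟩ := hq
  have hp' : p.Prime := Nat.prime_iff.mpr hp
  -- characteristic of `F` is `p`
  have hrc : ringChar F = p := by
    obtain ⟨k, -, hk⟩ := FiniteField.card F (ringChar F)
    have hrcp : (ringChar F).Prime := CharP.char_is_prime F (ringChar F)
    have : p ∣ ringChar F ^ (k : ℕ) := by
      rw [← hk, hF, ← pow_mul]
      exact dvd_pow_self p (by positivity)
    exact ((Nat.prime_dvd_prime_iff_eq hp' hrcp).mp (hp'.dvd_of_dvd_pow this)).symm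
  haveI : CharP F p := hrc ▸ ringChar.charP F
  haveI : ExpChar F p := ExpChar.prime hp'
  have hn₁pos : 0 < n₁ := hn₁.pos
  have hn₂pos : 0 < n₂ := hn₂.pos
  have hFcard : Fintype.card F = p ^ (2 * m) := by rw [hF, ← pow_mul, mul_comm]
  -- helper : nonzero constant coefficient for divisors of `X ^ n - 1`
  have coeff0 : ∀ (n : ℕ) (g : F[X]), 0 < n → g ∣ X ^ n - 1 → g.coeff 0 ≠ 0 := by
    intro n g hn hdvd h0
    obtain ⟨c, hc⟩ := hdvd
    have := congrArg (eval 0) hc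
    rw [coeff_zero_eq_eval_zero] at h0
    rw [eval_sub, eval_pow, eval_X, eval_one, eval_mul, h0, zero_mul] at this
    simp [zero_pow hn.ne'] at this
  ext f
  simp only [Set.mem_singleton_iff]
  constructor
  · rintro ⟨⟨hmon, hirr, hdag⟩, hdvd⟩
    have hf0 : f.coeff 0 ≠ 0 := coeff0 _ f (by positivity) hdvd
    have hfne : f ≠ 0 := hmon.ne_zero
    haveI : Fact (Irreducible f) := ⟨hirr⟩
    set K := AdjoinRoot f with hK
    haveI : Module.Finite F K := PowerBasis.finite (AdjoinRoot.powerBasis hfne)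
    haveI : Finite K := Module.finite_of_finite F
    haveI fK : Fintype K := Fintype.ofFinite K
    haveI : ExpChar K p := expChar_of_injective_algebraMap (algebraMap F K).injective p
    set α : K := AdjoinRoot.root f with hα
    have hαroot : aeval α f = 0 := by
      rw [aeval_def, AdjoinRoot.algebraMap_eq]; exact AdjoinRoot.eval₂_root f
    have hminf : minpoly F α = f := by
      rw [AdjoinRoot.minpoly_root hfne, hmon.leadingCoeff, inv_one, map_one, mul_one]
    have hα1 : α ^ (n₁ * n₂) = 1 := by
      obtain ⟨c, hc⟩ := hdvd
      have := congrArg (aeval α) hc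
      rw [map_sub, map_pow, aeval_X, map_one, map_mul, hαroot, zero_mul, sub_eq_zero] at this
      exact this
    have hα0 : α ≠ 0 := by
      intro h0
      rw [h0, zero_pow (Nat.mul_ne_zero hn₁pos.ne' hn₂pos.ne')] at hα1
      exact zero_ne_one hα1
    obtain ⟨t, hcardK⟩ : ∃ t, Fintype.card K = (p ^ m) ^ (2 * t + 2) := by
      refine ⟨Module.finrank F K - 1, ?_⟩
      have ht : 0 < Module.finrank F K := Module.finrank_pos
      rw [Module.card_eq_pow_finrank (K := F) (V := K), hF, ← pow_mul]
      congr 1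
      omega
    have powK : ∀ x : K, x ^ (p ^ m) ^ (2 * t + 2) = x := by
      intro x; rw [← hcardK]; exact FiniteField.pow_card x
    -- the `q`-th root map on K
    have qroot : ∀ x : K, (x ^ (p ^ m) ^ (2 * t + 1)) ^ p ^ m = x := by
      intro x
      rw [← pow_mul, ← pow_succ]
      exact powK x
    -- Lemma A : `(α ^ q)⁻¹` is a root of `f`
    have hnegq : aeval ((α ^ p ^ m)⁻¹) f = 0 := by
      set δ : K := α ^ (p ^ m) ^ (2 * t + 1) with hδ
      have hδq : δ ^ p ^ m = α := qroot α
      have hδ0 : δ ≠ 0 := pow_ne_zero _ hα0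
      have h1 : aeval δ (crecip f) = 0 := by
        have := aeval_map_iterateFrobenius (K := K) p m (crecip f) δ
        rw [← cdagger_eq_map_s7, ← hdag, hδq, hαroot] at this
        exact (pow_eq_zero_iff (pow_ne_zero m hp'.ne_zero)).mp this.symm
      have h2 : aeval δ⁻¹ f = 0 := by
        haveI : Invertible (δ⁻¹ : K) := invertibleOfNonzero (inv_ne_zero hδ0)
        have hrev : aeval δ (f.reverse) = 0 := by
          have : aeval δ (crecip f) = algebraMap F K (f.coeff 0)⁻¹ * aeval δ f.reverse := by
            rw [crecip, map_mul, aeval_C]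
          rw [this] at h1
          rcases mul_eq_zero.mp h1 with h | h
          · exact absurd h (by simp [hf0])
          · exact h
        have hinv : (⅟(δ⁻¹) : K) = δ := by
          rw [invOf_eq_inv, inv_inv]
        have := (eval₂_reverse_eq_zero_iff (algebraMap F K) (δ⁻¹) f).mp
          (by rw [hinv]; rw [aeval_def] at hrev; exact hrev)
        rw [aeval_def]; exact this
      have h3 := aeval_pow_card_eq_zero (K := K) p (2 * m) hp'.ne_zero hFcard f δ⁻¹ h2
      have heq : (δ⁻¹) ^ p ^ (2 * m) = (α ^ p ^ m)⁻¹ := by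
        rw [inv_pow]
        congr 1
        rw [hδ, ← pow_mul,
          show (p ^ m) ^ (2 * t + 1) * p ^ (2 * m) = (p ^ m) ^ (2 * t + 2) * p ^ m by
            rw [← pow_mul, ← pow_mul, ← pow_add, ← pow_add]; congr 1; ring,
          pow_mul, powK α]
      rwa [heq] at h3
    -- β and its minimal polynomial
    set β : K := α ^ n₂ with hβ
    have hβ0 : β ≠ 0 := pow_ne_zero _ hα0
    have hint : IsIntegral F β := IsIntegral.of_finite F β
    set f₁ : F[X] := minpoly F β with hf₁
    have h₁mon : f₁.Monic := minpoly.monic hint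
    have h₁irr : Irreducible f₁ := minpoly.irreducible hint
    have h₁dvd : f₁ ∣ X ^ n₁ - 1 := by
      apply minpoly.dvd
      rw [map_sub, map_pow, aeval_X, map_one, sub_eq_zero, hβ, ← pow_mul, mul_comm n₂ n₁, hα1]
    have h₁0 : f₁.coeff 0 ≠ 0 := coeff0 n₁ f₁ hn₁pos h₁dvd
    -- `(β ^ q)⁻¹` is a root of `f₁`
    have h₁negq : aeval ((β ^ p ^ m)⁻¹) f₁ = 0 := by
      have hH : aeval α (f₁.comp (X ^ n₂)) = 0 := by
        rw [aeval_comp, map_pow, aeval_X, ← hβ, minpoly.aeval]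
      have hfH : f ∣ f₁.comp (X ^ n₂) := hminf ▸ minpoly.dvd F α hH
      obtain ⟨c, hc⟩ := hfH
      have := congrArg (aeval ((α ^ p ^ m)⁻¹)) hc
      rw [map_mul, hnegq, zero_mul, aeval_comp, map_pow, aeval_X] at this
      rw [show ((β ^ p ^ m)⁻¹ : K) = ((α ^ p ^ m)⁻¹) ^ n₂ by
        rw [hβ, ← pow_mul, mul_comm n₂ (p ^ m), pow_mul, inv_pow]]
      exact this
    -- Lemma B : `f₁` is self-conjugate-reciprocal
    have h₁dag : f₁ = cdagger (p ^ m) f₁ := by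
      set δ : K := β ^ (p ^ m) ^ (2 * t + 1) with hδ
      have hδq : δ ^ p ^ m = β := qroot β
      have hδ0 : δ ≠ 0 := pow_ne_zero _ hβ0
      have h2 : aeval δ⁻¹ f₁ = 0 := by
        have := aeval_pow_card_iter_eq_zero (K := K) p (2 * m) hp'.ne_zero hFcard f₁
          ((β ^ p ^ m)⁻¹) h₁negq t
        have heq : ((β ^ p ^ m)⁻¹) ^ (p ^ (2 * m)) ^ t = δ⁻¹ := by
          rw [← inv_pow, ← pow_mul, hδ, ← inv_pow, ← pow_mul, ← pow_mul, ← pow_mul]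
          congr 2
          ring
        rwa [heq] at this
      have hrev : aeval δ (crecip f₁) = 0 := by
        haveI : Invertible (δ⁻¹ : K) := invertibleOfNonzero (inv_ne_zero hδ0)
        have hinv : (⅟(δ⁻¹) : K) = δ := by
          rw [invOf_eq_inv, inv_inv]
        have := (eval₂_reverse_eq_zero_iff (algebraMap F K) (δ⁻¹) f₁).mpr
          (by rw [aeval_def] at h2; exact h2)
        rw [hinv] at this
        rw [crecip, map_mul, aeval_C, aeval_def, this, mul_zero]
      have hβroot : aeval β (cdagger (p ^ m) f₁) = 0 := by
        have := aeval_map_iterateFrobenius (K := K) p m (crecip f₁) δ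
        rw [← cdagger_eq_map_s7, hδq, hrev] at this
        rw [this, zero_pow (pow_ne_zero m hp'.ne_zero)]
      -- `cdagger f₁` is monic of the same degree, and `f₁` divides it
      have hcmon : (cdagger (p ^ m) f₁).Monic := by
        rw [cdagger_eq_map_s7]
        apply Polynomial.Monic.map
        have htc : f₁.trailingCoeff = f₁.coeff 0 := by
          rw [trailingCoeff, natTrailingDegree_eq_zero.mpr (Or.inr h₁0)]
        rw [Monic, crecip, leadingCoeff_mul, leadingCoeff_C, reverse_leadingCoeff, htc,
          inv_mul_cancel₀ h₁0]
      have hdeg : (cdagger (p ^ m) f₁).natDegree = f₁.natDegree := by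
        rw [cdagger_eq_map_s7, Polynomial.natDegree_map_eq_of_injective
          (iterateFrobenius F p m).injective, crecip, natDegree_C_mul (inv_ne_zero h₁0),
          reverse_natDegree, natTrailingDegree_eq_zero.mpr (Or.inr h₁0), Nat.sub_zero]
      have hdvd₁ : f₁ ∣ cdagger (p ^ m) f₁ := minpoly.dvd F β hβroot
      obtain ⟨c, hc⟩ := hdvd₁
      have hcne : c ≠ 0 := by
        rintro rfl; rw [mul_zero] at hc; rw [hc] at hcmon; exact hcmon.ne_zero rfl
      have hcdeg : c.natDegree = 0 := by
        have := hdeg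
        rw [hc, natDegree_mul h₁mon.ne_zero hcne] at this
        omega
      obtain ⟨a, ha⟩ := natDegree_eq_zero.mp hcdeg
      have ha1 : a = 1 := by
        have := hcmon
        rw [hc, ← ha, Monic, leadingCoeff_mul, h₁mon.leadingCoeff, one_mul,
          leadingCoeff_C] at this
        exact this
      rw [hc, ← ha, ha1, map_one, mul_one]
    -- conclude `f₁ = X - 1`, hence `β = 1`
    have h₁mem : f₁ ∈ scrimFactors F (p ^ m) n₁ := ⟨⟨h₁mon, h₁irr, h₁dag⟩, h₁dvd⟩
    rw [hone₁, Set.mem_singleton_iff] at h₁mem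
    have hβ1 : β = 1 := by
      have := minpoly.aeval F β
      rw [← hf₁, h₁mem, map_sub, aeval_X, map_one, sub_eq_zero] at this
      exact this
    -- hence `f ∣ X ^ n₂ - 1` and `f = X - 1`
    have hfn₂ : f ∣ X ^ n₂ - 1 := by
      rw [← hminf]
      apply minpoly.dvd
      rw [map_sub, map_pow, aeval_X, map_one, sub_eq_zero, ← hβ, hβ1]
    have hmem : f ∈ scrimFactors F (p ^ m) n₂ := ⟨⟨hmon, hirr, hdag⟩, hfn₂⟩
    rw [hone₂, Set.mem_singleton_iff] at hmem
    exact hmem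
  · rintro rfl
    have h1 : (X - 1 : F[X]) ∈ scrimFactors F (p ^ m) n₁ := by rw [hone₁]; rfl
    obtain ⟨hs, hd⟩ := h1
    refine ⟨hs, hd.trans ?_⟩
    have := sub_dvd_pow_sub_pow (X ^ n₁ : F[X]) 1 n₂
    rwa [one_pow, ← pow_mul] at this
end

section
/- Let q be a prime power, let l_1, l_2, ..., l_t be distinct odd primes coprime to q, let r_1, ..., r_t be positive integers, and for each i write ord_{l_i}(q) = 2^{a_i} d_i with a_i ≥ 0 an integer and d_i an odd positive integer. If there exists j ∈ {1, ..., t} such that a_j = 0 or a_j ≥ 2, then |Ω_{q^2, ∏_{i=1}^t l_i^{r_i}}| = |Ω_{q^2, ∏_{i≠j} l_i^{r_i}}| (the empty product being 1). -/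
/-
If `f` is SCRIM and `α` is a root of `f`, then so is `α⁻¹ ^ q`, which is therefore a Galois
conjugate `α ^ (q ^ 2) ^ i` of `α` over `𝔽_{q²}`; cancelling the injective map `x ↦ x ^ q` gives
`α ^ (q ^ e + 1) = 1` for an odd `e`. So the order of `α` divides `n` and some `q ^ e + 1` with `e`
odd. An odd prime `l` with `ord_l(q) = 2 ^ a * d`, `a ≠ 1`, `d` odd, never divides `q ^ e + 1` for
odd `e`, since then `ord_l(q)` would divide `2 * e` but not `e`. Hence the factor `l ^ r` can be
dropped from `n` without losing any SCRIM factor of `X ^ n - 1`.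
-/

open Polynomial

theorem FiniteField.exists_eq_pow_card_pow_of_aeval_minpoly {K L : Type*} [Field K] [Fintype K]
    [Field L] [Finite L] [Algebra K L] {x y : L} (h : aeval y (minpoly K x) = 0) :
    ∃ i, y = x ^ Fintype.card K ^ i := by
  obtain ⟨σ, rfl⟩ := minpoly.exists_algEquiv_of_root' (Algebra.IsAlgebraic.isAlgebraic x) h
  obtain ⟨i, rfl⟩ := (bijective_frobeniusAlgEquivOfAlgebraic_pow K L).2 σ
  exact ⟨i, by rw [AlgEquiv.coe_pow, coe_frobeniusAlgEquivOfAlgebraic_iterate]⟩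

theorem FiniteField.exists_charP_of_card_eq_pow {F : Type*} [Field F] [Fintype F] {q n : ℕ}
    (hq : IsPrimePow q) (hn : n ≠ 0) (hF : Fintype.card F = q ^ n) :
    ∃ p k, p.Prime ∧ p ^ k = q ∧ CharP F p := by
  obtain ⟨p, k, hp, hk, rfl⟩ := hq
  obtain ⟨m, hc, hcard⟩ := FiniteField.card F (ringChar F)
  have hpc : p ∣ ringChar F ^ (m : ℕ) :=
    hcard ▸ hF ▸ (dvd_pow_self p (by omega)).trans (dvd_pow_self _ hn)
  refine ⟨p, k, hp.nat_prime, rfl, ?_⟩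
  rw [(Nat.prime_dvd_prime_iff_eq hp.nat_prime hc).mp (hp.nat_prime.dvd_of_dvd_pow hpc)]
  infer_instance

section Dagger

variable {F : Type*} [Field F]

theorem coeff_zero_ne_zero_of_eq_cdagger {q : ℕ} {f : F[X]} (hf : f ≠ 0)
    (h : f = cdagger q f) : f.coeff 0 ≠ 0 := by
  intro h0
  apply hf
  rw [h]
  simp [cdagger, crecip, h0]

theorem aeval_inv_crecip_eq_zero {L : Type*} [Field L] [Algebra F L] {f : F[X]} {x : L}
    (hx : aeval x f = 0) : aeval x⁻¹ (crecip f) = 0 := by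
  rcases eq_or_ne x 0 with rfl | hx0
  · rw [← coeff_zero_eq_aeval_zero', map_eq_zero] at hx
    simp [crecip, hx]
  · have : Invertible x := invertibleOfNonzero hx0
    have hrev : aeval (⅟x) f.reverse = 0 := by
      rw [aeval_def, eval₂_reverse_eq_zero_iff, ← aeval_def, hx]
    simp [crecip, ← invOf_eq_inv, hrev]

theorem cdagger_eq_map_iterateFrobenius {p k : ℕ} [ExpChar F p] (f : F[X]) :
    cdagger (p ^ k) f = (crecip f).map (iterateFrobenius F p k) := by
  simp [cdagger, Polynomial.map, eval₂_eq_sum, iterateFrobenius_def]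

theorem aeval_pow_cdagger {L : Type*} [Field L] [Algebra F L] {p k : ℕ} [ExpChar F p]
    (f : F[X]) (x : L) :
    aeval (x ^ p ^ k) (cdagger (p ^ k) f) = aeval x (crecip f) ^ p ^ k := by
  have : ExpChar L p := expChar_of_injective_algebraMap (algebraMap F L).injective p
  rw [cdagger_eq_map_iterateFrobenius, ← iterateFrobenius_def (R := L), aeval_def, aeval_def,
    ← iterateFrobenius_def (R := L), hom_eval₂, eval₂_map]
  congr 1
  ext c
  simp [iterateFrobenius_def]

end Dagger

section SCRIM

variable {F : Type*} [Field F] [Fintype F] {q : ℕ}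

theorem IsSCRIM.exists_odd_pow_add_one_eq_one (hq : IsPrimePow q) (hF : Fintype.card F = q ^ 2)
    {f : F[X]} (hf : IsSCRIM q f) {L : Type*} [Field L] [Finite L] [Algebra F L] {x : L}
    (hx : aeval x f = 0) : ∃ e, Odd e ∧ x ^ (q ^ e + 1) = 1 := by
  obtain ⟨p, k, hp, rfl, hchar⟩ := FiniteField.exists_charP_of_card_eq_pow hq two_ne_zero hF
  have : Fact p.Prime := ⟨hp⟩
  have : CharP L p := charP_of_injective_algebraMap (algebraMap F L).injective p
  have hx0 : x ≠ 0 := by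
    rintro rfl
    refine coeff_zero_ne_zero_of_eq_cdagger hf.2.1.ne_zero hf.2.2 ?_
    rwa [← map_eq_zero_iff _ (algebraMap F L).injective, coeff_zero_eq_aeval_zero']
  have hroot : aeval (x⁻¹ ^ p ^ k) f = 0 := by
    rw [hf.2.2, aeval_pow_cdagger, aeval_inv_crecip_eq_zero hx, zero_pow (pow_ne_zero _ hp.ne_zero)]
  rw [minpoly.eq_of_irreducible_of_monic hf.2.1 hx hf.1] at hroot
  obtain ⟨_ | i, hi⟩ := FiniteField.exists_eq_pow_card_pow_of_aeval_minpoly hroot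
  · refine ⟨1, odd_one, ?_⟩
    rw [pow_zero, pow_one] at hi
    rw [pow_one, pow_succ]
    nth_rw 2 [← hi]
    rw [← mul_pow, mul_inv_cancel₀ hx0, one_pow]
  · refine ⟨2 * i + 1, odd_two_mul_add_one i, ?_⟩
    have hinv : x⁻¹ = x ^ (p ^ k) ^ (2 * i + 1) := by
      refine iterateFrobenius_inj L p k ?_
      rw [iterateFrobenius_def, iterateFrobenius_def, hi, hF]
      ring
    rw [pow_succ, ← hinv, inv_mul_cancel₀ hx0]

theorem IsSCRIM.dvd_X_pow_sub_one_of_dvd_mul (hq : IsPrimePow q) (hF : Fintype.card F = q ^ 2)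
    {f : F[X]} (hf : IsSCRIM q f) {m n : ℕ} (hm : ∀ e, Odd e → Nat.Coprime m (q ^ e + 1))
    (hdvd : f ∣ X ^ (m * n) - 1) : f ∣ X ^ n - 1 := by
  have : Fact (Irreducible f) := ⟨hf.2.1⟩
  have : Module.Finite F (AdjoinRoot f) := hf.1.finite_adjoinRoot
  have : Finite (AdjoinRoot f) := Module.finite_of_finite F
  have hdvd_iff : ∀ N, f ∣ X ^ N - 1 ↔ orderOf (AdjoinRoot.root f) ∣ N := fun N => by
    rw [orderOf_dvd_iff_pow_eq_one, ← AdjoinRoot.mk_eq_zero, ← AdjoinRoot.aeval_eq, map_sub,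
      map_pow, aeval_X, map_one, sub_eq_zero]
  have hroot : aeval (AdjoinRoot.root f) f = 0 := AdjoinRoot.aeval_eq f ▸ AdjoinRoot.mk_self
  obtain ⟨e, he, hpow⟩ := hf.exists_odd_pow_add_one_eq_one hq hF hroot
  have hcop : Nat.Coprime (orderOf (AdjoinRoot.root f)) m :=
    (Nat.Coprime.coprime_dvd_right (orderOf_dvd_of_pow_eq_one hpow) (hm e he)).symm
  rw [hdvd_iff] at hdvd ⊢
  exact hcop.dvd_of_dvd_mul_left hdvd

theorem scrimFactors_mul_eq (hq : IsPrimePow q) (hF : Fintype.card F = q ^ 2) {m n : ℕ}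
    (hm : ∀ e, Odd e → Nat.Coprime m (q ^ e + 1)) :
    scrimFactors F q (m * n) = scrimFactors F q n := by
  ext f
  exact ⟨fun ⟨hf, hdvd⟩ => ⟨hf, hf.dvd_X_pow_sub_one_of_dvd_mul hq hF hm hdvd⟩,
    fun ⟨hf, hdvd⟩ => ⟨hf, hdvd.trans <| by
      simpa only [one_pow, ← pow_mul'] using sub_dvd_pow_sub_pow (X ^ n : F[X]) 1 m⟩⟩

end SCRIM

theorem Nat.eq_one_of_two_pow_mul_dvd_two_mul {a d e : ℕ} (hd : Odd d) (he : Odd e)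
    (h : 2 ^ a * d ∣ 2 * e) (h' : ¬ 2 ^ a * d ∣ e) : a = 1 := by
  rcases a with _ | _ | a
  · rw [pow_zero, one_mul] at h h'
    exact absurd (((Nat.coprime_two_right).2 hd).dvd_of_dvd_mul_left h) h'
  · rfl
  · have : 4 ∣ 2 * e := (Dvd.intro (2 ^ a * d) (by ring)).trans h
    obtain ⟨c, rfl⟩ := he
    omega

theorem not_dvd_pow_add_one_of_orderOf_eq {l q a d e : ℕ} (hl : l.Prime) (hlodd : Odd l)
    (hord : orderOf (q : ZMod l) = 2 ^ a * d) (hd : Odd d) (ha : a ≠ 1) (he : Odd e) :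
    ¬ l ∣ q ^ e + 1 := by
  intro h
  have : Fact l.Prime := ⟨hl⟩
  have : Fact (2 < l) := ⟨hl.two_le.lt_of_ne (by rintro rfl; exact Nat.not_odd_iff_even.2 even_two hlodd)⟩
  have hneg : (q : ZMod l) ^ e = -1 := by
    rw [eq_neg_iff_add_eq_zero]
    exact_mod_cast (ZMod.natCast_eq_zero_iff _ _).2 h
  refine ha (Nat.eq_one_of_two_pow_mul_dvd_two_mul hd he ?_ ?_) <;> rw [← hord]
  · exact orderOf_dvd_of_pow_eq_one (by rw [pow_mul', hneg, neg_one_sq])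
  · rw [orderOf_dvd_iff_pow_eq_one, hneg]
    exact ZMod.neg_one_ne_one

theorem stmt11_general {q t : ℕ} (hq : IsPrimePow q)
    {F : Type*} [Field F] [Fintype F] (hF : Fintype.card F = q ^ 2)
    (l r a d : Fin t → ℕ)
    (hl : ∀ i, (l i).Prime) (hlodd : ∀ i, Odd (l i))
    (hord : ∀ i, orderOf ((q : ZMod (l i))) = 2 ^ (a i) * d i)
    (hd : ∀ i, Odd (d i))
    (j : Fin t) (hj : a j = 0 ∨ 2 ≤ a j) :
    (scrimFactors F q (∏ i, l i ^ r i)).ncard =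
      (scrimFactors F q (∏ i ∈ Finset.univ.erase j, l i ^ r i)).ncard := by
  have hcoprime : ∀ e, Odd e → Nat.Coprime (l j ^ r j) (q ^ e + 1) := fun e he =>
    .pow_left _ <| (hl j).coprime_iff_not_dvd.2 <|
      not_dvd_pow_add_one_of_orderOf_eq (hl j) (hlodd j) (hord j) (hd j) (by omega) he
  rw [← Finset.mul_prod_erase _ _ (Finset.mem_univ j), scrimFactors_mul_eq hq hF hcoprime]

theorem stmt11 {q t : ℕ} (hq : IsPrimePow q)
    {F : Type*} [Field F] [Fintype F] (hF : Fintype.card F = q ^ 2)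
    (l r a d : Fin t → ℕ)
    (hl : ∀ i, (l i).Prime) (hlodd : ∀ i, Odd (l i)) (hlq : ∀ i, Nat.Coprime (l i) q)
    (hinj : Function.Injective l) (hr : ∀ i, 0 < r i)
    (hord : ∀ i, orderOf ((q : ZMod (l i))) = 2 ^ (a i) * d i)
    (hd : ∀ i, Odd (d i))
    (j : Fin t) (hj : a j = 0 ∨ 2 ≤ a j) :
    (scrimFactors F q (∏ i, l i ^ r i)).ncard =
      (scrimFactors F q (∏ i ∈ Finset.univ.erase j, l i ^ r i)).ncard :=
  stmt11_general hq hF l r a d hl hlodd hord hd j hj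
end

section
/- Let q be a prime power, let l_1, l_2, ..., l_t be distinct odd primes coprime to q, let r_1, ..., r_t be positive integers, and for each i write ord_{l_i}(q) = 2^{a_i} d_i with a_i ≥ 0 an integer and d_i an odd positive integer. If a_i ≠ 1 for all i ∈ {1, ..., t}, then |Ω_{q^2, ∏_{i=1}^t l_i^{r_i}}| = 1, i.e., x − 1 is the only SCRIM factor of x^{∏ l_i^{r_i}} − 1 over F_{q^2}. -/
open Polynomial

lemma aux_charP {F : Type*} [Field F] [Fintype F] {p m : ℕ} (hp : p.Prime) (hm : 0 < m)
    (hF : Fintype.card F = p ^ m) : CharP F p := by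
  obtain ⟨n, hchar, hcard⟩ := FiniteField.card F (ringChar F)
  have h1 : p ∣ ringChar F ^ (n : ℕ) := by
    rw [← hcard, hF]; exact dvd_pow_self p hm.ne'
  have h2 : p = ringChar F := (Nat.prime_dvd_prime_iff_eq hp hchar).mp (hp.dvd_of_dvd_pow h1)
  rw [h2]; exact ringChar.charP F

lemma aux_mem_range {F K : Type*} [Field F] [Fintype F] [Field K] [Algebra F K]
    {x : K} (hx : x ^ Fintype.card F = x) : ∃ c : F, algebraMap F K c = x := by
  classical
  set Q := Fintype.card F with hQ
  have hQ2 : 1 < Q := Fintype.one_lt_card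
  set P : K[X] := X ^ Q - X with hP
  have hPne : P ≠ 0 := by
    intro h
    have h1 : P.coeff Q = 1 := by
      simp only [hP, coeff_sub, coeff_X_pow, coeff_X, if_pos rfl, if_neg hQ2.ne]
      norm_num
    rw [h] at h1
    simp at h1
  have hroots : ∀ y : K, y ^ Q = y → y ∈ P.roots.toFinset := by
    intro y hy
    rw [Multiset.mem_toFinset, mem_roots hPne]
    simp [hP, IsRoot, sub_eq_zero, hy]
  have hTcard : P.roots.toFinset.card ≤ Q := by
    refine le_trans (Multiset.toFinset_card_le _) (le_trans (card_roots' P) ?_)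
    refine le_trans (natDegree_sub_le _ _) ?_
    simp [natDegree_X_pow]
    omega
  set S := Finset.univ.image (algebraMap F K) with hS
  have hScard : S.card = Q := by
    rw [hS, Finset.card_image_of_injective _ (algebraMap F K).injective, Finset.card_univ]
  have hST : S ⊆ P.roots.toFinset := by
    intro y hy
    rw [hS, Finset.mem_image] at hy
    obtain ⟨c, -, rfl⟩ := hy
    exact hroots _ (by rw [← map_pow, FiniteField.pow_card])
  have hEq : S = P.roots.toFinset :=
    Finset.eq_of_subset_of_card_le hST (le_trans hTcard hScard.ge)
  have hxT : x ∈ P.roots.toFinset := hroots x hx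
  rw [← hEq, hS, Finset.mem_image] at hxT
  obtain ⟨c, -, hc⟩ := hxT
  exact ⟨c, hc⟩

lemma cdagger_eq_map_s13 {F : Type*} [Field F] (q : ℕ) (φ : F →+* F) (hφ : ∀ x, φ x = x ^ q)
    (f : F[X]) : cdagger q f = (crecip f).map φ := by
  show _ = eval₂ (C.comp φ) X (crecip f)
  rw [cdagger, eval₂_eq_sum]
  exact Finset.sum_congr rfl fun n _ => by simp [hφ]

theorem stmt13 {q t : ℕ} (hq : IsPrimePow q)
    {F : Type*} [Field F] [Fintype F] (hF : Fintype.card F = q ^ 2)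
    (l r a d : Fin t → ℕ)
    (hl : ∀ i, (l i).Prime) (hlodd : ∀ i, Odd (l i)) (hlq : ∀ i, Nat.Coprime (l i) q)
    (hinj : Function.Injective l) (hr : ∀ i, 0 < r i)
    (hord : ∀ i, orderOf ((q : ZMod (l i))) = 2 ^ (a i) * d i)
    (hd : ∀ i, Odd (d i))
    (ha : ∀ i, a i ≠ 1) :
    scrimFactors F q (∏ i, l i ^ r i) = {X - 1} := by
  classical
  obtain ⟨p, k, hp', hk, rfl⟩ := hq
  have hp : p.Prime := hp'.nat_prime
  haveI : Fact p.Prime := ⟨hp⟩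
  set q := p ^ k with hqdef
  haveI : CharP F p := aux_charP (m := 2 * k) hp (by omega) (by rw [hF, hqdef]; ring)
  haveI : ExpChar F p := ExpChar.prime hp
  set n := ∏ i, l i ^ r i with hn
  have hn1 : 0 < n := Finset.prod_pos fun i _ => pow_pos (hl i).pos _
  have hnq : Nat.Coprime n q := Nat.Coprime.prod_left fun i _ => (hlq i).pow_left _
  have hq1 : 1 < q := Nat.one_lt_pow hk.ne' hp.one_lt
  -- the conjugation ring hom
  set φ : F →+* F := iterateFrobenius F p k with hφdef
  have hφ : ∀ x : F, φ x = x ^ q := fun x => by rw [hφdef, iterateFrobenius_def, hqdef]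
  have hcd : ∀ f : F[X], cdagger q f = (crecip f).map φ := cdagger_eq_map_s13 q φ hφ
  ext f
  simp only [scrimFactors, Set.mem_setOf_eq, Set.mem_singleton_iff]
  constructor
  · rintro ⟨⟨hmon, hirr, hself⟩, hdvd⟩
    set K := AlgebraicClosure F with hK
    haveI : CharP K p := charP_of_injective_algebraMap (algebraMap F K).injective p
    haveI : ExpChar K p := ExpChar.prime hp
    set i : F →+* K := algebraMap F K with hidef
    obtain ⟨α, hα0⟩ := IsAlgClosed.exists_aeval_eq_zero K f
      (ne_of_gt (degree_pos_of_irreducible hirr))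
    have hαn : α ^ n = 1 := by
      obtain ⟨g, hg⟩ := hdvd
      have h1 : aeval α (X ^ n - 1 : F[X]) = 0 := by
        rw [hg, map_mul, hα0, zero_mul]
      simpa [sub_eq_zero] using h1
    have hα_ne : α ≠ 0 := by
      intro h
      rw [h, zero_pow hn1.ne'] at hαn
      exact zero_ne_one hαn
    set j := orderOf α with hj
    have hjn : j ∣ n := orderOf_dvd_of_pow_eq_one hαn
    have hminpoly : f = minpoly F α := minpoly.eq_of_irreducible_of_monic hirr hα0 hmon
    by_cases hj1 : j = 1
    · have hα1 : α = 1 := orderOf_eq_one_iff.mp hj1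
      rw [hminpoly, hα1, show (1 : K) = algebraMap F K 1 from (map_one _).symm,
        minpoly.eq_X_sub_C, map_one]
    exfalso
    -- f has nonzero constant coefficient
    have hc0 : f.coeff 0 ≠ 0 := by
      intro h
      have hXf : (X : F[X]) ∣ X ^ n - 1 := (X_dvd_iff.mpr h).trans hdvd
      have h21 := X_dvd_iff.mp hXf
      rw [coeff_sub, coeff_X_pow, if_neg (by omega : ¬ (0 = n)), coeff_one_zero] at h21
      norm_num at h21
    -- the inverse-q-th-root of α⁻¹ is a root of f
    obtain ⟨β, hβ⟩ := IsAlgClosed.exists_pow_nat_eq α (lt_trans one_pos hq1)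
    have hβ0 : β ≠ 0 := by
      intro h; rw [h, zero_pow (by omega : q ≠ 0)] at hβ; exact hα_ne hβ.symm
    set ψ : K →+* K := iterateFrobenius K p k with hψdef
    have hψ : ∀ x : K, ψ x = x ^ q := fun x => by rw [hψdef, iterateFrobenius_def, hqdef]
    have h1 : eval₂ (i.comp φ) α (crecip f) = 0 := by
      have h2 : aeval α ((crecip f).map φ) = 0 := by rw [← hcd, ← hself]; exact hα0
      rwa [aeval_def, eval₂_map] at h2
    have h3 : aeval β (crecip f) = 0 := by
      have hcomp : ψ.comp i = i.comp φ :=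
        RingHom.ext fun c => by simp only [RingHom.comp_apply, hψ, hφ, map_pow]
      have hψβ : ψ β = α := by rw [hψ, hβ]
      apply ψ.injective
      rw [map_zero, aeval_def, hom_eval₂, hcomp, hψβ, h1]
    have hrev : aeval β (reverse f) = 0 := by
      rw [crecip, map_mul, aeval_C] at h3
      rcases mul_eq_zero.mp h3 with h | h
      · exact absurd h (by simp [hc0])
      · exact h
    have hroot2 : aeval β⁻¹ f = 0 := by
      haveI : Invertible (β⁻¹ : K) := invertibleOfNonzero (inv_ne_zero hβ0)
      have hinv : (⅟(β⁻¹ : K)) = β := by rw [invOf_eq_inv, inv_inv]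
      rw [aeval_def, ← eval₂_reverse_eq_zero_iff i β⁻¹ f, hinv, ← aeval_def]
      exact hrev
    set γ := β⁻¹ with hγdef
    have hγq : γ ^ q = α⁻¹ := by rw [hγdef, inv_pow, hβ]
    -- the Frobenius x ↦ x^Q on K, Q = card F
    set Q := Fintype.card F with hQdef
    have hQq : Q = q ^ 2 := hF
    set ψ2 : K →+* K := iterateFrobenius K p (2 * k) with hψ2def
    have hψ2 : ∀ x : K, ψ2 x = x ^ Q := by
      intro x
      rw [hψ2def, iterateFrobenius_def, hQq, hqdef, ← pow_mul, mul_comm k 2]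
    have hψ2i : ∀ c : F, ψ2 (i c) = i c := by
      intro c
      rw [hψ2, ← map_pow, FiniteField.pow_card]
    -- roots of f are closed under x ↦ x ^ Q
    have hstep : ∀ x : K, aeval x f = 0 → aeval (x ^ Q) f = 0 := by
      intro x hx
      have h4 : ψ2 (aeval x f) = aeval (x ^ Q) f := by
        rw [aeval_def, hom_eval₂, aeval_def, hψ2]
        congr 1
        exact RingHom.ext fun c => hψ2i c
      rw [← h4, hx, map_zero]
    have horb : ∀ m : ℕ, aeval (α ^ Q ^ m) f = 0 := by
      intro m
      induction m with
      | zero => simpa using hα0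
      | succ m ih =>
        have := hstep _ ih
        rwa [← pow_mul, ← pow_succ] at this
    -- the orbit polynomial G
    set e := Nat.totient j with hedef
    have he0 : 0 < e := Nat.totient_pos.mpr (Nat.pos_of_dvd_of_pos hjn hn1)
    have hQj : Nat.Coprime Q j := by
      rw [hQq]
      exact Nat.Coprime.pow_left _ ((Nat.Coprime.coprime_dvd_left hjn hnq).symm)
    have hQpos : 0 < Q := by rw [hQq]; exact pow_pos (by omega) 2
    have hQe1 : 1 ≤ Q ^ e := Nat.one_le_pow _ _ hQpos
    have hαQe : α ^ Q ^ e = α := by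
      have h5 : Q ^ e ≡ 1 [MOD j] := Nat.ModEq.pow_totient hQj
      have h6 : j ∣ Q ^ e - 1 := (Nat.modEq_iff_dvd' hQe1).mp h5.symm
      have h7 : α ^ (Q ^ e - 1) = 1 := orderOf_dvd_iff_pow_eq_one.mp h6
      calc α ^ Q ^ e = α ^ (Q ^ e - 1) * α := by
            rw [← pow_succ]
            congr 1
            omega
        _ = α := by rw [h7, one_mul]
    set G : K[X] := ∏ m ∈ Finset.range e, (X - C (α ^ Q ^ m)) with hGdef
    have hGmap : G.map ψ2 = G := by
      rw [hGdef, Polynomial.map_prod]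
      have h8 : ∀ m : ℕ, (X - C (α ^ Q ^ m)).map ψ2 = X - C (α ^ Q ^ (m + 1)) := by
        intro m
        rw [Polynomial.map_sub, map_X, map_C, hψ2, ← pow_mul, ← pow_succ]
      rw [Finset.prod_congr rfl fun m _ => h8 m]
      set u : ℕ → K[X] := fun m => X - C (α ^ Q ^ m) with hu
      have hue : u e = u 0 := by
        rw [hu]
        simp only []
        rw [hαQe, pow_zero, pow_one]
      have h9 : (∏ m ∈ Finset.range e, u (m + 1)) * u 0 = (∏ m ∈ Finset.range e, u m) * u 0 := by
        rw [← Finset.prod_range_succ', Finset.prod_range_succ, hue]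
      exact mul_right_cancel₀ (X_sub_C_ne_zero _) h9
    obtain ⟨G₀, hG₀⟩ : ∃ G₀ : F[X], G₀.map i = G := by
      rw [← Polynomial.mem_lifts]
      rw [Polynomial.lifts_iff_coeff_lifts]
      intro m
      have h10 : G.coeff m ^ Q = G.coeff m := by
        have := congrArg (fun P => Polynomial.coeff P m) hGmap
        simpa [coeff_map, hψ2] using this
      obtain ⟨c, hc⟩ := aux_mem_range h10
      exact ⟨c, hc⟩
    have hfG : f ∣ G₀ := by
      rw [hminpoly]
      apply minpoly.dvd
      rw [aeval_def, ← eval_map, hG₀, hGdef]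
      rw [eval_prod]
      apply Finset.prod_eq_zero (Finset.mem_range.mpr he0)
      simp
    have hγG : eval γ G = 0 := by
      obtain ⟨h, hh⟩ := Polynomial.map_dvd i hfG
      rw [hG₀] at hh
      rw [hh, eval_mul]
      have : eval γ (f.map i) = 0 := by rw [eval_map, ← aeval_def]; exact hroot2
      rw [this, zero_mul]
    obtain ⟨m, -, hm⟩ : ∃ m ∈ Finset.range e, γ = α ^ Q ^ m := by
      rw [hGdef, eval_prod] at hγG
      obtain ⟨m, hmr, hm0⟩ := Finset.prod_eq_zero_iff.mp hγG
      refine ⟨m, hmr, ?_⟩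
      simpa [sub_eq_zero] using hm0
    -- j divides q ^ (2m+1) + 1
    set M := 2 * m + 1 with hM
    have hjM : j ∣ q ^ M + 1 := by
      apply orderOf_dvd_of_pow_eq_one
      have h11 : α ^ (Q ^ m * q) = α⁻¹ := by
        rw [pow_mul, ← hm, hγq]
      have h12 : Q ^ m * q = q ^ M := by
        rw [hQq, ← pow_mul, hM, ← pow_succ]
      rw [pow_add, pow_one, ← h12, h11, inv_mul_cancel₀ hα_ne]
    -- extract a prime factor of j and derive the contradiction
    have hj2 : 2 ≤ j := by
      rcases Nat.lt_or_ge j 2 with h | h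
      · interval_cases j
        · exact absurd hjn (by simpa using hn1.ne')
        · exact absurd rfl hj1
      · exact h
    set l0 := j.minFac with hl0def
    have hl0 : l0.Prime := Nat.minFac_prime (by omega)
    have hl0n : l0 ∣ n := (Nat.minFac_dvd j).trans hjn
    obtain ⟨i0, -, hi0⟩ := (hl0.prime.dvd_finset_prod_iff _).mp hl0n
    have hl0eq : l0 = l i0 :=
      (Nat.prime_dvd_prime_iff_eq hl0 (hl i0)).mp (hl0.dvd_of_dvd_pow hi0)
    have hlM : l i0 ∣ q ^ M + 1 := hl0eq ▸ ((Nat.minFac_dvd j).trans hjM)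
    have hqm : ((q : ZMod (l i0))) ^ M = -1 := by
      have h13 : ((q ^ M + 1 : ℕ) : ZMod (l i0)) = 0 :=
        (ZMod.natCast_eq_zero_iff _ _).mpr hlM
      push_cast at h13
      linear_combination h13
    have hlgt2 : 2 < l i0 := by
      rcases Nat.lt_or_ge 2 (l i0) with h | h
      · exact h
      · exfalso
        have h14 : l i0 = 2 := le_antisymm h (hl i0).two_le
        have := hlodd i0
        rw [h14] at this
        exact (Nat.not_odd_iff_even.mpr (by decide)) this
    haveI : Fact (2 < l i0) := ⟨hlgt2⟩
    have hne1 : ((q : ZMod (l i0))) ^ M ≠ 1 := by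
      rw [hqm]
      exact ZMod.neg_one_ne_one
    have hndvd : ¬ orderOf ((q : ZMod (l i0))) ∣ M := fun h =>
      hne1 (orderOf_dvd_iff_pow_eq_one.mp h)
    have hdvd2M : orderOf ((q : ZMod (l i0))) ∣ M * 2 := by
      apply orderOf_dvd_of_pow_eq_one
      rw [pow_mul, hqm, neg_one_sq]
    rw [hord i0] at hndvd hdvd2M
    have hcase : a i0 = 0 ∨ 2 ≤ a i0 := by
      have := ha i0; omega
    rcases hcase with h | h
    · rw [h, pow_zero, one_mul] at hndvd hdvd2M
      exact hndvd (Nat.Coprime.dvd_of_dvd_mul_right (hd i0).coprime_two_right hdvd2M)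
    · have h15 : (4 : ℕ) ∣ 2 ^ (a i0) * d i0 := by
        have : (2 : ℕ) ^ 2 ∣ 2 ^ (a i0) := pow_dvd_pow 2 h
        exact dvd_mul_of_dvd_left (by simpa using this) _
      have h16 : (4 : ℕ) ∣ M * 2 := h15.trans hdvd2M
      omega
  · rintro rfl
    have hrevX : reverse (X : F[X]) = 1 := by
      rw [← mul_one (X : F[X]), reverse_X_mul, ← C_1, reverse_C]
    have hrev1 : reverse (X - 1 : F[X]) = 1 - X := by
      have h20 : (X - 1 : F[X]) = C (-1) + X := by rw [C_neg, C_1]; ring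
      rw [h20, reverse_C_add, hrevX, natDegree_X, pow_one, C_neg, C_1]
      ring
    have hcoeff : (X - 1 : F[X]).coeff 0 = -1 := by simp
    have hcrecip : crecip (X - 1 : F[X]) = X - 1 := by
      rw [crecip, hcoeff, hrev1]
      simp only [map_neg, map_one, inv_neg, inv_one]
      ring
    refine ⟨⟨monic_X_sub_C 1, ?_, ?_⟩, ?_⟩
    · simpa using irreducible_X_sub_C (1 : F)
    · rw [hcd, hcrecip, Polynomial.map_sub, map_X, Polynomial.map_one]
    · simpa using sub_dvd_pow_sub_pow (X : F[X]) 1 n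
end
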